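/- arXiv:2205.01485 — 6 statements merged into one kernel-verified Lean document; each statement's English description precedes it below -/
import Mathlib

section
/- Let C_Δ^P be a monomial-Cartesian code and let d be its minimum Hamming distance. Then d ≥ d_0(C_Δ^P) := min{dis(e) : e ∈ Δ}; equivalently, every nonzero codeword ev_P(f) with f ∈ V_Δ, f not vanishing identically on P, has Hamming weight at least d_0(C_Δ^P), i.e., every nonzero polynomial in V_Δ has at most n − d_0(C_Δ^P) zeros in P. -/
/-- The set of evaluation points `P = P₁ × ⋯ × P_m`. -/
abbrev MCCPt {F : Type*} {m : ℕ} (P : Fin m → Finset F) : Type _ :=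
  (j : Fin m) → {x // x ∈ P j}

/-- The evaluation vector of the monomial `X^e = X₁^{e₁} ⋯ X_m^{e_m}` at the points of `P`. -/
def evMon {F : Type*} [Field F] {m : ℕ} (P : Fin m → Finset F) (e : Fin m → ℕ) :
    MCCPt P → F :=
  fun x => ∏ j, (x j : F) ^ e j

/-- The monomial-Cartesian code `C_Δ^P = ev_P(V_Δ)`, the span of the evaluation vectors of the
monomials `X^e`, `e ∈ Δ`. -/
def MCC {F : Type*} [Field F] {m : ℕ} (P : Fin m → Finset F) (Δ : Finset (Fin m → ℕ)) :
    Submodule F (MCCPt P → F) :=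
  Submodule.span F (evMon P '' ↑Δ)


open Finset Polynomial

lemma mcc_key {F : Type*} [Field F] [Fintype F] [DecidableEq F] :
    ∀ (m : ℕ) {ι : Type} (T : Finset ι) (P : Fin m → Finset F) (E : ι → Fin m → ℕ)
      (a : ι → F), (∀ i ∈ T, ∀ j, E i j < (P j).card) →
      ∀ x₀ : (j : Fin m) → {x // x ∈ P j},
        (∑ i ∈ T, a i * ∏ j, ((x₀ j : F)) ^ E i j) ≠ 0 →
      ∃ i ∈ T, ∏ j, ((P j).card - E i j) ≤
        Fintype.card {x : (j : Fin m) → {x // x ∈ P j} //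
          (∑ i ∈ T, a i * ∏ j, ((x j : F)) ^ E i j) ≠ 0} := by
  intro m
  induction m with
  | zero =>
    intro ι T P E a _ x₀ hx₀
    have hTne : ∃ i, i ∈ T := by
      by_contra h
      push_neg at h
      exact hx₀ (Finset.sum_eq_zero fun i hi => absurd hi (h i))
    obtain ⟨i, hi⟩ := hTne
    refine ⟨i, hi, ?_⟩
    simp only [Finset.univ_eq_empty, Finset.prod_empty]
    exact Fintype.card_pos_iff.mpr ⟨⟨x₀, hx₀⟩⟩
  | succ m IH =>
    intro ι T P E a hE x₀ hx₀
    classical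
    set B := (j : Fin m) → {x // x ∈ P j.succ} with hB
    set A := {x // x ∈ P 0} with hA
    set g : ℕ → B → F :=
      fun k y => ∑ i ∈ T.filter (fun i => E i 0 = k),
        a i * ∏ j, ((y j : F)) ^ E i j.succ with hg
    set D := T.image (fun i => E i 0) with hD
    -- splitting identity
    have hsplit : ∀ (t : A) (y : B),
        (∑ i ∈ T, a i * ∏ j, ((Fin.cons (α := fun j => {x // x ∈ P j}) t y j : F)) ^ E i j)
          = ∑ k ∈ D, g k y * (t : F) ^ k := by
      intro t y
      rw [← Finset.sum_fiberwise_of_maps_to (g := fun i => E i 0)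
        (fun i hi => Finset.mem_image_of_mem _ hi)
        (fun i => a i * ∏ j, ((Fin.cons (α := fun j => {x // x ∈ P j}) t y j : F)) ^ E i j)]
      refine Finset.sum_congr rfl fun k hk => ?_
      rw [hg, Finset.sum_mul]
      refine Finset.sum_congr rfl fun i hi => ?_
      obtain ⟨-, hk⟩ := Finset.mem_filter.mp hi
      subst hk
      rw [Fin.prod_univ_succ]
      simp only [Fin.cons_zero, Fin.cons_succ]
      ring
    -- the set of "active" degrees in the last variable
    set T' := D.filter (fun k => ∃ y, g k y ≠ 0) with hT'
    have hT'ne : T'.Nonempty := by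
      have hx : (∑ k ∈ D, g k (Fin.tail x₀) * ((x₀ 0 : F)) ^ k) ≠ 0 := by
        have := hsplit (x₀ 0) (Fin.tail x₀)
        rw [Fin.cons_self_tail] at this
        rw [← this]; exact hx₀
      have : ∃ k ∈ D, g k (Fin.tail x₀) ≠ 0 := by
        by_contra h
        push_neg at h
        exact hx (Finset.sum_eq_zero fun k hk => by rw [h k hk, zero_mul])
      obtain ⟨k, hkD, hgk⟩ := this
      exact ⟨k, Finset.mem_filter.mpr ⟨hkD, ⟨_, hgk⟩⟩⟩
    set K := T'.max' hT'ne with hK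
    have hKmem := T'.max'_mem hT'ne
    obtain ⟨y₀, hy₀⟩ := (Finset.mem_filter.mp hKmem).2
    -- apply the inductive hypothesis to g K
    obtain ⟨i₀, hi₀mem, hi₀le⟩ :=
      IH (T.filter fun i => E i 0 = K) (fun j => P j.succ) (fun i j => E i j.succ) a
        (fun i hi j => hE i (Finset.mem_filter.mp hi).1 j.succ) y₀ hy₀
    have hgzero : ∀ k ∈ D, k ∉ T' → ∀ y : B, g k y = 0 := by
      intro k hk hk' y
      by_contra h
      exact hk' (Finset.mem_filter.mpr ⟨hk, ⟨y, h⟩⟩)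
    -- per-fiber estimate via univariate roots
    have hcard0 : ∀ y : B, g K y ≠ 0 →
        (P 0).card - K ≤ Fintype.card {t : A //
          (∑ i ∈ T, a i * ∏ j, ((Fin.cons (α := fun j => {x // x ∈ P j}) t y j : F)) ^ E i j) ≠ 0} := by
      intro y hy
      set p : F[X] := ∑ k ∈ T', Polynomial.C (g k y) * Polynomial.X ^ k with hp
      have hcoeff : p.coeff K = g K y := by
        rw [hp, Polynomial.finset_sum_coeff]
        rw [Finset.sum_eq_single K]
        · simp
        · intro k hk hne
          rw [Polynomial.coeff_C_mul, Polynomial.coeff_X_pow,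
            if_neg (fun h => hne h.symm), mul_zero]
        · intro h; exact absurd hKmem h
      have hp0 : p ≠ 0 := fun h => hy (by rw [← hcoeff, h, Polynomial.coeff_zero])
      have hdeg : p.natDegree ≤ K := by
        refine Polynomial.natDegree_sum_le_of_forall_le _ _ fun k hk => ?_
        refine le_trans (Polynomial.natDegree_C_mul_le _ _) ?_
        rw [Polynomial.natDegree_X_pow]
        exact Finset.le_max' _ _ hk
      have hfeval : ∀ t : A,
          (∑ i ∈ T, a i * ∏ j, ((Fin.cons (α := fun j => {x // x ∈ P j}) t y j : F)) ^ E i j) = p.eval (t : F) := by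
        intro t
        rw [hsplit t y, hp, Polynomial.eval_finset_sum]
        simp only [Polynomial.eval_mul, Polynomial.eval_C, Polynomial.eval_pow,
          Polynomial.eval_X]
        exact (Finset.sum_subset (Finset.filter_subset _ _)
          (fun k hk hk' => by rw [hgzero k hk hk' y, zero_mul])).symm
      have hZ : ((P 0).filter (fun t => p.eval t = 0)).card ≤ K := by
        refine le_trans (Polynomial.card_le_degree_of_subset_roots ?_) hdeg
        intro z hz
        rw [Finset.mem_val, Finset.mem_filter] at hz
        exact (Polynomial.mem_roots hp0).mpr hz.2
      have hcount : Fintype.card {t : A //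
          (∑ i ∈ T, a i * ∏ j, ((Fin.cons (α := fun j => {x // x ∈ P j}) t y j : F)) ^ E i j) ≠ 0}
          = ((P 0).filter (fun t => p.eval t ≠ 0)).card := by
        rw [Fintype.card_subtype]
        refine Finset.card_bij (fun t _ => (t : F)) ?_ ?_ ?_
        · intro t ht
          rw [Finset.mem_filter] at ht ⊢
          exact ⟨t.2, by rw [← hfeval t]; exact ht.2⟩
        · intro t₁ h₁ t₂ h₂ h
          exact Subtype.ext h
        · intro t ht
          rw [Finset.mem_filter] at ht
          exact ⟨⟨t, ht.1⟩, Finset.mem_filter.mpr ⟨Finset.mem_univ _,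
            by rw [hfeval]; exact ht.2⟩, rfl⟩
      rw [hcount]
      have h2 := Finset.card_filter_add_card_filter_not
        (s := P 0) (fun t => Polynomial.eval t p = 0)
      simp only [ne_eq]
      have h3 : #(Finset.filter (fun t => ¬ Polynomial.eval t p = 0) (P 0))
          = #(P 0) - #(Finset.filter (fun t => Polynomial.eval t p = 0) (P 0)) := by
        rw [← h2, Nat.add_sub_cancel_left]
      rw [h3]
      exact Nat.sub_le_sub_left hZ _
    -- decompose the global count fiberwise
    have htotal : Fintype.card {x : (j : Fin (m+1)) → {x // x ∈ P j} //
          (∑ i ∈ T, a i * ∏ j, ((x j : F)) ^ E i j) ≠ 0}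
        = ∑ y : B, Fintype.card {t : A //
          (∑ i ∈ T, a i * ∏ j, ((Fin.cons (α := fun j => {x // x ∈ P j}) t y j : F)) ^ E i j) ≠ 0} := by
      rw [← Fintype.card_sigma]
      refine Fintype.card_congr ?_
      refine Equiv.trans ?_ (Equiv.subtypeProdEquivSigmaSubtype
        (fun (y : B) (t : A) =>
          (∑ i ∈ T, a i * ∏ j, ((Fin.cons (α := fun j => {x // x ∈ P j}) t y j : F)) ^ E i j) ≠ 0))
      refine Equiv.subtypeEquiv
        (((Fin.consEquiv (fun j => {x // x ∈ P j})).symm).trans (Equiv.prodComm _ _)) ?_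
      intro x
      have hx : Fin.cons (α := fun j => {x // x ∈ P j}) (x 0) (Fin.tail x) = x := Fin.cons_self_tail x
      constructor
      · intro h
        simpa [Fin.consEquiv, hx] using h
      · intro h
        simpa [Fin.consEquiv, hx] using h
    refine ⟨i₀, (Finset.mem_filter.mp hi₀mem).1, ?_⟩
    rw [Fin.prod_univ_succ, htotal, (Finset.mem_filter.mp hi₀mem).2]
    calc ((P 0).card - K) * ∏ j : Fin m, ((P j.succ).card - E i₀ j.succ)
        ≤ ((P 0).card - K) * Fintype.card {y : B // g K y ≠ 0} :=
          Nat.mul_le_mul_left _ hi₀le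
      _ = ∑ y ∈ Finset.univ.filter (fun y : B => g K y ≠ 0), ((P 0).card - K) := by
          rw [Finset.sum_const, Fintype.card_subtype, smul_eq_mul, Nat.mul_comm]
      _ ≤ ∑ y ∈ Finset.univ.filter (fun y : B => g K y ≠ 0),
            Fintype.card {t : A //
              (∑ i ∈ T, a i * ∏ j, ((Fin.cons (α := fun j => {x // x ∈ P j}) t y j : F)) ^ E i j) ≠ 0} := by
          refine Finset.sum_le_sum fun y hy => hcard0 y (Finset.mem_filter.mp hy).2
      _ ≤ ∑ y : B, Fintype.card {t : A //
            (∑ i ∈ T, a i * ∏ j, ((Fin.cons (α := fun j => {x // x ∈ P j}) t y j : F)) ^ E i j) ≠ 0} :=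
          Finset.sum_le_sum_of_subset (Finset.filter_subset _ _)


/-- For a monomial-Cartesian code `C_Δ^P` with minimum distance `d` one has
`d ≥ d₀(C_Δ^P) := min{dis(e) : e ∈ Δ}`, where `dis(e) = ∏_j (n_j - e_j)`; equivalently, every
nonzero codeword has Hamming weight at least `d₀(C_Δ^P)`. -/
theorem mcc_min_dist_ge_d0
    {F : Type*} [Field F] [Fintype F] [DecidableEq F] {m : ℕ} (hm : 2 ≤ m)
    (P : Fin m → Finset F) (hP : ∀ j, 2 ≤ (P j).card)
    (Δ : Finset (Fin m → ℕ)) (hΔne : Δ.Nonempty)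
    (hΔE : ∀ e ∈ Δ, ∀ j, e j < (P j).card) :
    ∀ c ∈ MCC P Δ, c ≠ 0 →
      Δ.inf' hΔne (fun e => ∏ j, ((P j).card - e j)) ≤ hammingNorm c := by
  intro c hc hc0
  obtain ⟨n, r, v, hsum⟩ := Submodule.mem_span_set'.mp hc
  have hv : ∀ i, ∃ ε, ε ∈ Δ ∧ evMon P ε = (v i : MCCPt P → F) := fun i => (v i).2
  choose e he1 he2 using hv
  obtain ⟨x₀, hx₀⟩ : ∃ x, c x ≠ 0 := Function.ne_iff.mp hc0
  have hc' : ∀ x, c x = ∑ i : Fin n, r i * ∏ j, ((x j : F)) ^ e i j := by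
    intro x
    rw [← hsum]
    simp only [Finset.sum_apply, Pi.smul_apply, smul_eq_mul]
    exact Finset.sum_congr rfl fun i _ => by rw [← he2 i]; rfl
  obtain ⟨i, -, hle⟩ := mcc_key m Finset.univ P e r
    (fun i _ j => hΔE (e i) (he1 i) j) x₀ (by rw [← hc' x₀]; exact hx₀)
  refine le_trans (Finset.inf'_le _ (he1 i)) (le_trans hle ?_)
  rw [hammingNorm, Fintype.card_subtype]
  apply le_of_eq
  congr 1
  exact Finset.filter_congr fun x _ => by rw [← hc' x]
end

section
/- Let C_Δ^P be a monomial-Cartesian code and let l ∈ {1,…,m} be an index such that K_l := #supp_{X_l}(V_Δ) < n_l. Let V_Δ^l be the F_q-span of the monomials X_l^e with e ∈ supp_{X_l}(V_Δ), and suppose the univariate evaluation code ev_{P_l}(V_Δ^l) ⊆ F_q^{n_l} is MDS (its minimum distance equals n_l − K_l + 1). Then C_Δ^P is an (r,δ)-LRC with locality (r,δ) = (K_l, n_l − K_l + 1); moreover, for each coordinate i ∈ {1,…,n} the set R̄ of indices of the points of P that agree with the i-th point of P in all coordinates except the l-th satisfies i ∈ R̄, #R̄ = n_l = r + δ − 1,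 and the punctured code C_Δ^P[R̄] has minimum Hamming distance at least δ. -/
/-- The code `C ⊆ F^ι` has minimum Hamming distance exactly `d`. -/
def HasMinDist {F ι : Type*} [Field F] [DecidableEq F] [Fintype ι]
    (C : Submodule F (ι → F)) (d : ℕ) : Prop :=
  (∀ c ∈ C, c ≠ 0 → d ≤ hammingNorm c) ∧ ∃ c ∈ C, c ≠ 0 ∧ hammingNorm c = d

/-- The code `C ⊆ F^ι` is an `(r, δ)`-locally recoverable code: every coordinate `i` lies in a
set `R̄` of at most `r + δ - 1` coordinates such that the punctured code `C[R̄]` has minimum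
Hamming distance at least `δ`. -/
def IsLRC {F ι : Type*} [Field F] [DecidableEq F] [DecidableEq ι] [Fintype ι]
    (C : Submodule F (ι → F)) (r δ : ℕ) : Prop :=
  ∀ i : ι, ∃ R : Finset ι, i ∈ R ∧ R.card ≤ r + δ - 1 ∧
    ∀ c ∈ C, (∃ j ∈ R, c j ≠ 0) → δ ≤ (R.filter fun j => c j ≠ 0).card

/-- The univariate evaluation code `ev_{P_l}(V_Δ^l)`, spanned by the vectors
`(x^e)_{x ∈ P_l}` for `e ∈ supp_{X_l}(V_Δ)`. -/
def uniCode {F : Type*} [Field F] {m : ℕ} (P : Fin m → Finset F)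
    (Δ : Finset (Fin m → ℕ)) (l : Fin m) : Submodule F ({x // x ∈ P l} → F) :=
  Submodule.span F ((fun e : ℕ => fun x : {x // x ∈ P l} => (x : F) ^ e) ''
    ↑(Δ.image fun e => e l))

set_option linter.unusedSectionVars false
section Aux

variable {F : Type*} [Field F] [DecidableEq F] {m : ℕ} {P : Fin m → Finset F}

private lemma line_eq {l : Fin m} {x y : MCCPt P} (h : ∀ j, j ≠ l → y j = x j) :
    y = Function.update x l (y l) := by
  funext j
  by_cases hj : j = l
  · subst hj; simp
  · rw [Function.update_of_ne hj, h j hj]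

private lemma restrict_mem (Δ : Finset (Fin m → ℕ)) (l : Fin m) (x : MCCPt P)
    {c : MCCPt P → F} (hc : c ∈ MCC P Δ) :
    (fun t : {v // v ∈ P l} => c (Function.update x l t)) ∈ uniCode P Δ l := by
  have hrepr : (fun t : {v // v ∈ P l} => c (Function.update x l t))
      = LinearMap.funLeft F F (fun t : {v // v ∈ P l} => Function.update x l t) c := rfl
  rw [hrepr]
  have hmap : (MCC P Δ).map
      (LinearMap.funLeft F F (fun t : {v // v ∈ P l} => Function.update x l t))
      ≤ uniCode P Δ l := by
    rw [MCC, Submodule.map_span, Submodule.span_le]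
    rintro _ ⟨_, ⟨e, he, rfl⟩, rfl⟩
    have hval : LinearMap.funLeft F F (fun t : {v // v ∈ P l} => Function.update x l t)
        (evMon P e)
        = (∏ j ∈ Finset.univ.erase l, (x j : F) ^ e j) •
          (fun t : {v // v ∈ P l} => (t : F) ^ e l) := by
      funext t
      simp only [LinearMap.funLeft_apply, evMon, Pi.smul_apply, smul_eq_mul]
      rw [← Finset.mul_prod_erase Finset.univ _ (Finset.mem_univ l)]
      rw [Finset.prod_congr rfl (fun j hj => by
        rw [Function.update_of_ne (Finset.ne_of_mem_erase hj)])]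
      rw [Function.update_self]
      ring
    rw [hval]
    refine Submodule.smul_mem _ _ (Submodule.subset_span ⟨e l, ?_, rfl⟩)
    simp only [Finset.coe_image, Set.mem_image, Finset.mem_coe]
    exact ⟨e, he, rfl⟩
  exact hmap ⟨c, hc, rfl⟩

private lemma card_line (l : Fin m) (x : MCCPt P) (q : MCCPt P → Prop) [DecidablePred q] :
    ((Finset.univ.filter fun y : MCCPt P => ∀ j, j ≠ l → y j = x j).filter fun y => q y).card
      = (Finset.univ.filter fun t : {v // v ∈ P l} =>
          q (Function.update x l t)).card := by
  refine Finset.card_bij (fun y _ => y l) ?_ ?_ ?_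
  · intro y hy
    simp only [Finset.mem_filter, Finset.mem_univ, true_and] at hy ⊢
    rw [← line_eq hy.1]
    exact hy.2
  · intro y₁ hy₁ y₂ hy₂ h
    simp only [Finset.mem_filter, Finset.mem_univ, true_and] at hy₁ hy₂
    rw [line_eq hy₁.1, line_eq hy₂.1]
    exact congrArg _ h
  · intro t ht
    simp only [Finset.mem_filter, Finset.mem_univ, true_and] at ht
    refine ⟨Function.update x l t, ?_, Function.update_self _ _ _⟩
    simp only [Finset.mem_filter, Finset.mem_univ, true_and]
    constructor
    · intro j hj; exact Function.update_of_ne hj _ _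
    · exact ht

end Aux

/-- If `K_l := #supp_{X_l}(V_Δ) < n_l` and the univariate code
`ev_{P_l}(V_Δ^l)` is MDS, then `C_Δ^P` is an `(r, δ)`-LRC with
`(r, δ) = (K_l, n_l - K_l + 1)`; moreover, for every coordinate `x` the set `R̄` of points of
`P` agreeing with `x` in all coordinates except the `l`-th contains `x`, has cardinality
`n_l = r + δ - 1`, and the punctured code `C_Δ^P[R̄]` has minimum distance at least `δ`. -/
theorem mcc_is_lrc
    {F : Type*} [Field F] [Fintype F] [DecidableEq F] {m : ℕ} (hm : 2 ≤ m)
    (P : Fin m → Finset F) (hP : ∀ j, 2 ≤ (P j).card)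
    (Δ : Finset (Fin m → ℕ)) (hΔne : Δ.Nonempty)
    (hΔE : ∀ e ∈ Δ, ∀ j, e j < (P j).card)
    (l : Fin m) (hK : (Δ.image fun e => e l).card < (P l).card)
    (hMDS : HasMinDist (uniCode P Δ l)
      ((P l).card - (Δ.image fun e => e l).card + 1)) :
    IsLRC (MCC P Δ) (Δ.image fun e => e l).card
      ((P l).card - (Δ.image fun e => e l).card + 1) ∧
    ∀ x : MCCPt P,
      x ∈ (Finset.univ.filter fun y : MCCPt P => ∀ j, j ≠ l → y j = x j) ∧
      (Finset.univ.filter fun y : MCCPt P => ∀ j, j ≠ l → y j = x j).card = (P l).card ∧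
      (P l).card = (Δ.image fun e => e l).card +
        ((P l).card - (Δ.image fun e => e l).card + 1) - 1 ∧
      ∀ c ∈ MCC P Δ,
        (∃ y ∈ Finset.univ.filter fun y : MCCPt P => ∀ j, j ≠ l → y j = x j, c y ≠ 0) →
          (P l).card - (Δ.image fun e => e l).card + 1 ≤
            ((Finset.univ.filter fun y : MCCPt P => ∀ j, j ≠ l → y j = x j).filter
              fun y => c y ≠ 0).card := by
  have hline_card : ∀ x : MCCPt P,
      (Finset.univ.filter fun y : MCCPt P => ∀ j, j ≠ l → y j = x j).card = (P l).card := by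
    intro x
    have h := card_line l x (fun _ => True)
    simp only [Finset.filter_true] at h
    rw [h, Finset.card_univ, Fintype.card_coe]
  have hdist : ∀ x : MCCPt P, ∀ c ∈ MCC P Δ,
      (∃ y ∈ Finset.univ.filter fun y : MCCPt P => ∀ j, j ≠ l → y j = x j, c y ≠ 0) →
        (P l).card - (Δ.image fun e => e l).card + 1 ≤
          ((Finset.univ.filter fun y : MCCPt P => ∀ j, j ≠ l → y j = x j).filter
            fun y => c y ≠ 0).card := by
    rintro x c hc ⟨y, hy, hcy⟩
    have hg := restrict_mem Δ l x hc
    have hgne : (fun t : {v // v ∈ P l} => c (Function.update x l t)) ≠ 0 := by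
      intro h0
      simp only [Finset.mem_filter, Finset.mem_univ, true_and] at hy
      apply hcy
      have h1 : c (Function.update x l (y l)) = 0 := congrFun h0 (y l)
      rwa [← line_eq hy] at h1
    have hle := hMDS.1 _ hg hgne
    rw [card_line l x (fun y => c y ≠ 0)]
    simpa [hammingNorm] using hle
  constructor
  · intro i
    refine ⟨Finset.univ.filter fun y : MCCPt P => ∀ j, j ≠ l → y j = i j, ?_, ?_, hdist i⟩
    · simp
    · rw [hline_card i]
      generalize (Finset.image (fun e => e l) Δ).card = K at hK ⊢
      omega
  · intro x
    refine ⟨?_, hline_card x, ?_, hdist x⟩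
    · simp
    · generalize (Finset.image (fun e => e l) Δ).card = K at hK ⊢
      omega
end

section
/- Let m = 2 and for 0 ≤ i ≤ n_1−1, 0 ≤ j ≤ n_2−1 let Δ_{i,j} := {(e_1,e_2) : 0 ≤ e_1 ≤ i, 0 ≤ e_2 ≤ j} ⊆ E. The monomial-Cartesian code C := C_{Δ_{i,j}}^P has length n = n_1n_2, dimension k = (i+1)(j+1) and minimum distance d = (n_1−i)(n_2−j), and C is an optimal (r,δ)-LRC (with locality obtained by recovery along lines in one coordinate direction, namely (r,δ) = (i+1, n_1−i) when i ≤ n_1−2, or (r,δ) = (j+1, n_2−j) when j ≤ n_2−2) if and only if one of the following holds: (a) i = 0 and 0 ≤ j ≤ n_2−1, with (r,δ) = (1, n_1); (b) 1 ≤ i ≤ n_1−2 and j = n_2−1, with (r,δ) = (i+1, n_1−i); (c) j = 0 and 0 ≤ i ≤ n_1−1, with (r,δ) = (1, n_2); (d) i = n_1−1 and 1 ≤ j ≤ n_2−2, with (r,δ) = (j+1, n_2−j). -/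
/-- `C` is an optimal `(r, δ)`-LRC with dimension `k` and minimum distance `d`:
it is an `(r, δ)`-LRC attaining the Singleton-like bound
`k + d + (⌈k/r⌉ - 1)(δ - 1) = n + 1`. -/
def IsOptimalLRC {F ι : Type*} [Field F] [DecidableEq F] [DecidableEq ι] [Fintype ι]
    (C : Submodule F (ι → F)) (k d r δ : ℕ) : Prop :=
  IsLRC C r δ ∧ Module.finrank F C = k ∧ HasMinDist C d ∧
    k + d + ((k + r - 1) / r - 1) * (δ - 1) = Fintype.card ι + 1

/-- The rectangle `Δ_{i,j} = {(e₁,e₂) : 0 ≤ e₁ ≤ i, 0 ≤ e₂ ≤ j}` as a set of exponents. -/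
def rectΔ (i j : ℕ) : Finset (Fin 2 → ℕ) :=
  (Finset.range (i + 1) ×ˢ Finset.range (j + 1)).image fun p => ![p.1, p.2]

/-!
A codeword of `C_{Δ_{i,j}}` is the evaluation of `f = ∑ λ_{ab} X^a Y^b` with `deg_X f ≤ i` and
`deg_Y f ≤ j`. If `λ_{a₀b₀} ≠ 0`, the polynomial `∑_b λ_{a₀b} Y^b` is nonzero at `≥ n₂ - j` points
`y ∈ P₂`, and for each of them `f(X, y)` has a nonzero `X^{a₀}`-coefficient, so it is nonzero at
`≥ n₁ - i` points of `P₁`. Hence every nonzero codeword has weight `≥ (n₁ - i)(n₂ - j)`, which also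
makes the evaluated monomials independent; the bound is attained by
`∏_{α ∈ A} (X - α) ∏_{β ∈ B} (Y - β)` with `A ⊆ P₁`, `B ⊆ P₂` of sizes `i`, `j`.
For `(r, δ) = (i + 1, n₁ - i)` one has `⌈k / r⌉ = j + 1` and
`n + 1 - (k + d + j (δ - 1)) = i (n₂ - j - 1)`, so the Singleton-like bound is attained exactly when
`i = 0` or `j = n₂ - 1`; the other direction is symmetric.
-/
open Finset Polynomial

section Counting
variable {R : Type*} [CommRing R] [IsDomain R] [DecidableEq R]

theorem Polynomial.card_sub_natDegree_le_card_filter_eval_ne_zero {p : R[X]} (hp : p ≠ 0)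
    (S : Finset R) : #S - p.natDegree ≤ #{x ∈ S | p.eval x ≠ 0} := by
  have hroots : #{x ∈ S | p.eval x = 0} ≤ p.natDegree :=
    card_le_degree_of_subset_roots fun x hx => by
      rw [mem_roots hp, IsRoot.def]
      exact (mem_filter.mp (mem_val.mp hx)).2
  have := card_filter_add_card_filter_not (s := S) (fun x => p.eval x = 0)
  simp only [ne_eq]
  omega

theorem card_sub_le_card_filter_sum_ne_zero {t : ℕ} {μ : Fin (t + 1) → R} (hμ : μ ≠ 0)
    (S : Finset R) : #S - t ≤ #{x ∈ S | ∑ a, μ a * x ^ (a : ℕ) ≠ 0} := by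
  set p := (degreeLTEquiv R (t + 1)).symm μ
  have hcoeff : ∀ a : Fin (t + 1), (p : R[X]).coeff a = μ a := fun a =>
    congrFun ((degreeLTEquiv R (t + 1)).apply_symm_apply μ) a
  have hp : (p : R[X]) ≠ 0 := by
    intro h
    apply hμ
    funext a
    simpa [h] using (hcoeff a).symm
  have hdeg : (p : R[X]).natDegree < t + 1 :=
    (natDegree_lt_iff_degree_lt hp).mpr (mem_degreeLT.mp p.2)
  have heval : ∀ x, (p : R[X]).eval x = ∑ a, μ a * x ^ (a : ℕ) := fun x => by
    rw [eval_eq_sum_range' hdeg, ← Fin.sum_univ_eq_sum_range]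
    simp only [hcoeff]
  calc #S - t ≤ #S - (p : R[X]).natDegree := by omega
    _ ≤ _ := card_sub_natDegree_le_card_filter_eval_ne_zero hp S
    _ = _ := by simp only [heval]

theorem mul_le_card_filter_sum_ne_zero {i j : ℕ} {g : Fin (i + 1) × Fin (j + 1) → R} (hg : g ≠ 0)
    (S T : Finset R) :
    (#S - i) * (#T - j) ≤
      #{z ∈ S ×ˢ T | ∑ p, g p * z.1 ^ (p.1 : ℕ) * z.2 ^ (p.2 : ℕ) ≠ 0} := by
  obtain ⟨⟨a₀, b₀⟩, hab⟩ := Function.ne_iff.mp hg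
  set T' := {y ∈ T | ∑ b, g (a₀, b) * y ^ (b : ℕ) ≠ 0}
  have hT' : #T - j ≤ #T' :=
    card_sub_le_card_filter_sum_ne_zero (Function.ne_iff.mpr ⟨b₀, hab⟩) T
  have hrow : ∀ y ∈ T', #S - i ≤ #{x ∈ S | ∑ p, g p * x ^ (p.1 : ℕ) * y ^ (p.2 : ℕ) ≠ 0} := by
    intro y hy
    have hμ : (fun a => ∑ b, g (a, b) * y ^ (b : ℕ)) ≠ 0 :=
      Function.ne_iff.mpr ⟨a₀, (mem_filter.mp hy).2⟩
    convert card_sub_le_card_filter_sum_ne_zero hμ S using 6 with x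
    simp only [Fintype.sum_prod_type, sum_mul]
    exact sum_congr rfl fun a _ => sum_congr rfl fun b _ => mul_right_comm _ _ _
  calc (#S - i) * (#T - j) ≤ #T' • (#S - i) := by rw [smul_eq_mul, mul_comm]; gcongr
    _ ≤ ∑ y ∈ T', #{x ∈ S | ∑ p, g p * x ^ (p.1 : ℕ) * y ^ (p.2 : ℕ) ≠ 0} :=
      card_nsmul_le_sum _ _ _ hrow
    _ ≤ ∑ y ∈ T, #{x ∈ S | ∑ p, g p * x ^ (p.1 : ℕ) * y ^ (p.2 : ℕ) ≠ 0} :=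
      sum_le_sum_of_subset (filter_subset _ _)
    _ = _ := by simp only [card_filter, sum_product_right]

theorem card_filter_eval_prod_X_sub_C_ne_zero {A S : Finset R} (hA : A ⊆ S) :
    #{x ∈ S | (∏ α ∈ A, (X - C α)).eval x ≠ 0} = #S - #A := by
  rw [← card_sdiff_of_subset hA]
  congr 1
  ext x
  simp [eval_prod, prod_ne_zero_iff, sub_eq_zero]

end Counting

section RectangleCode
variable {F : Type*} [Field F] (P : Fin 2 → Finset F) (i j : ℕ)

def rectMonomial (p : Fin (i + 1) × Fin (j + 1)) : MCCPt P → F :=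
  evMon P ![(p.1 : ℕ), p.2]

theorem coe_rectΔ :
    (rectΔ i j : Set (Fin 2 → ℕ)) =
      Set.range fun p : Fin (i + 1) × Fin (j + 1) => ![(p.1 : ℕ), p.2] := by
  ext e
  simp [rectΔ, Fin.exists_iff, and_assoc]

theorem MCC_rectΔ_eq_span :
    MCC P (rectΔ i j) = Submodule.span F (Set.range (rectMonomial P i j)) := by
  rw [MCC, coe_rectΔ, ← Set.range_comp]
  rfl

theorem sum_smul_rectMonomial_apply (g : Fin (i + 1) × Fin (j + 1) → F) (x : MCCPt P) :
    (∑ p, g p • rectMonomial P i j p) x =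
      ∑ p, g p * (x 0 : F) ^ (p.1 : ℕ) * (x 1 : F) ^ (p.2 : ℕ) := by
  simp [rectMonomial, evMon, Fin.prod_univ_two, mul_assoc]

theorem hammingNorm_eq_card_filter_product [DecidableEq F] (f : F → F → F) :
    hammingNorm (fun x : MCCPt P => f (x 0) (x 1)) = #{z ∈ P 0 ×ˢ P 1 | f z.1 z.2 ≠ 0} := by
  rw [hammingNorm, card_filter, card_filter, ← (piFinTwoEquiv _).symm.sum_comp,
    Fintype.sum_prod_type, sum_product, ← sum_coe_sort (P 0)]
  simp_rw [← sum_coe_sort (P 1)]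
  rfl

variable {P i j}

theorem eval_mul_eval_mem_MCC_rectΔ {p q : F[X]} (hp : p.natDegree ≤ i) (hq : q.natDegree ≤ j) :
    (fun x : MCCPt P => p.eval (x 0 : F) * q.eval (x 1 : F)) ∈ MCC P (rectΔ i j) := by
  rw [MCC_rectΔ_eq_span, Submodule.mem_span_range_iff_exists_fun]
  refine ⟨fun p' => p.coeff p'.1 * q.coeff p'.2, funext fun x => ?_⟩
  rw [sum_smul_rectMonomial_apply, eval_eq_sum_range' (Nat.lt_succ_of_le hp),
    eval_eq_sum_range' (Nat.lt_succ_of_le hq), ← Fin.sum_univ_eq_sum_range,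
    ← Fin.sum_univ_eq_sum_range (fun b => q.coeff b * (x 1 : F) ^ b), sum_mul_sum,
    Fintype.sum_prod_type]
  exact sum_congr rfl fun a _ => sum_congr rfl fun b _ => by ring

variable [DecidableEq F]

theorem mul_le_hammingNorm_sum_smul_rectMonomial {g : Fin (i + 1) × Fin (j + 1) → F}
    (hg : g ≠ 0) :
    (#(P 0) - i) * (#(P 1) - j) ≤ hammingNorm (∑ p, g p • rectMonomial P i j p) := by
  rw [funext (sum_smul_rectMonomial_apply P i j g),
    hammingNorm_eq_card_filter_product P fun x y => ∑ p, g p * x ^ (p.1 : ℕ) * y ^ (p.2 : ℕ)]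
  exact mul_le_card_filter_sum_ne_zero hg _ _

theorem linearIndependent_rectMonomial (hi : i < #(P 0)) (hj : j < #(P 1)) :
    LinearIndependent F (rectMonomial P i j) := by
  refine Fintype.linearIndependent_iff.mpr fun g hg => ?_
  by_contra! hne
  have := mul_le_hammingNorm_sum_smul_rectMonomial (P := P) (Function.ne_iff.mpr hne)
  rw [hg, hammingNorm_zero, Nat.le_zero, Nat.mul_eq_zero] at this
  omega

theorem finrank_MCC_rectΔ (hi : i < #(P 0)) (hj : j < #(P 1)) :
    Module.finrank F (MCC P (rectΔ i j)) = (i + 1) * (j + 1) := by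
  rw [MCC_rectΔ_eq_span, finrank_span_eq_card (linearIndependent_rectMonomial hi hj)]
  simp

theorem mul_le_hammingNorm_of_mem_MCC_rectΔ {c : MCCPt P → F} (hc : c ∈ MCC P (rectΔ i j))
    (hc₀ : c ≠ 0) : (#(P 0) - i) * (#(P 1) - j) ≤ hammingNorm c := by
  rw [MCC_rectΔ_eq_span, Submodule.mem_span_range_iff_exists_fun] at hc
  obtain ⟨g, rfl⟩ := hc
  refine mul_le_hammingNorm_sum_smul_rectMonomial fun hg => hc₀ ?_
  simp [hg]

theorem exists_hammingNorm_eq_of_MCC_rectΔ (hi : i < #(P 0)) (hj : j < #(P 1)) :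
    ∃ c ∈ MCC P (rectΔ i j), c ≠ 0 ∧ hammingNorm c = (#(P 0) - i) * (#(P 1) - j) := by
  obtain ⟨A, hA, rfl⟩ := exists_subset_card_eq hi.le
  obtain ⟨B, hB, rfl⟩ := exists_subset_card_eq hj.le
  set p : F[X] := ∏ α ∈ A, (X - C α)
  set q : F[X] := ∏ β ∈ B, (X - C β)
  have hnorm : hammingNorm (fun x : MCCPt P => p.eval (x 0 : F) * q.eval (x 1 : F)) =
      (#(P 0) - #A) * (#(P 1) - #B) := by
    rw [hammingNorm_eq_card_filter_product P (fun x y => p.eval x * q.eval y)]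
    simp only [mul_ne_zero_iff]
    rw [filter_product (fun x => p.eval x ≠ 0) (fun y => q.eval y ≠ 0), card_product,
      card_filter_eval_prod_X_sub_C_ne_zero hA, card_filter_eval_prod_X_sub_C_ne_zero hB]
  refine ⟨_, eval_mul_eval_mem_MCC_rectΔ ?_ ?_, fun h => ?_, hnorm⟩
  · exact (natDegree_finsetProd_X_sub_C_eq_card A id).le
  · exact (natDegree_finsetProd_X_sub_C_eq_card B id).le
  · rw [h, hammingNorm_zero, eq_comm, Nat.mul_eq_zero] at hnorm
    omega

theorem hasMinDist_MCC_rectΔ (hi : i < #(P 0)) (hj : j < #(P 1)) :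
    HasMinDist (MCC P (rectΔ i j)) ((#(P 0) - i) * (#(P 1) - j)) :=
  ⟨fun _ hc hc₀ => mul_le_hammingNorm_of_mem_MCC_rectΔ hc hc₀,
    exists_hammingNorm_eq_of_MCC_rectΔ hi hj⟩

end RectangleCode

theorem rect_singleton_bound_eq_iff {n₁ n₂ i j : ℕ} (hi : i < n₁) (hj : j < n₂) :
    (i + 1) * (j + 1) + (n₁ - i) * (n₂ - j) +
        (((i + 1) * (j + 1) + (i + 1) - 1) / (i + 1) - 1) * (n₁ - i - 1) = n₁ * n₂ + 1 ↔
      i = 0 ∨ j = n₂ - 1 := by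
  obtain ⟨u, rfl⟩ := Nat.exists_eq_add_of_lt hi
  obtain ⟨w, rfl⟩ := Nat.exists_eq_add_of_lt hj
  have hceil : ((i + 1) * (j + 1) + (i + 1) - 1) / (i + 1) - 1 = j := by
    rw [show (i + 1) * (j + 1) + (i + 1) - 1 = (i + 1) * (j + 1) + i by omega,
      Nat.mul_add_div i.succ_pos, Nat.div_eq_of_lt i.lt_succ_self]
    rfl
  rw [hceil, show i + u + 1 - i - 1 = u by omega, show i + u + 1 - i = u + 1 by omega,
    show j + w + 1 - j = w + 1 by omega,
    show (i + u + 1) * (j + w + 1) + 1 =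
      (i + 1) * (j + 1) + (u + 1) * (w + 1) + j * u + i * w by ring]
  simp

theorem IsOptimalLRC.eq_zero_or_eq_sub_one {F ι : Type*} [Field F] [DecidableEq F] [DecidableEq ι]
    [Fintype ι] {C : Submodule F (ι → F)} {k d n₁ n₂ i j : ℕ}
    (h : IsOptimalLRC C k d (i + 1) (n₁ - i)) (hk : k = (i + 1) * (j + 1))
    (hd : d = (n₁ - i) * (n₂ - j)) (hn : Fintype.card ι = n₁ * n₂) (hi : i < n₁) (hj : j < n₂) :
    i = 0 ∨ j = n₂ - 1 := by
  have := h.2.2.2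
  rw [hk, hd, hn] at this
  exact (rect_singleton_bound_eq_iff hi hj).mp this

theorem rect_mcc_optimal_iff_general
    {F : Type*} [Field F] [DecidableEq F]
    (P : Fin 2 → Finset F) (hP : ∀ j, 2 ≤ (P j).card)
    (i j : ℕ) (hi : i ≤ (P 0).card - 1) (hj : j ≤ (P 1).card - 1) :
    Fintype.card (MCCPt P) = (P 0).card * (P 1).card ∧
    Module.finrank F (MCC P (rectΔ i j)) = (i + 1) * (j + 1) ∧
    HasMinDist (MCC P (rectΔ i j)) (((P 0).card - i) * ((P 1).card - j)) ∧
    (((i ≤ (P 0).card - 2 ∧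
        IsOptimalLRC (MCC P (rectΔ i j)) ((i + 1) * (j + 1))
          (((P 0).card - i) * ((P 1).card - j)) (i + 1) ((P 0).card - i)) ∨
      (j ≤ (P 1).card - 2 ∧
        IsOptimalLRC (MCC P (rectΔ i j)) ((i + 1) * (j + 1))
          (((P 0).card - i) * ((P 1).card - j)) (j + 1) ((P 1).card - j))) ↔
    ((i = 0 ∧
        IsOptimalLRC (MCC P (rectΔ i j)) ((i + 1) * (j + 1))
          (((P 0).card - i) * ((P 1).card - j)) 1 (P 0).card) ∨
      (1 ≤ i ∧ i ≤ (P 0).card - 2 ∧ j = (P 1).card - 1 ∧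
        IsOptimalLRC (MCC P (rectΔ i j)) ((i + 1) * (j + 1))
          (((P 0).card - i) * ((P 1).card - j)) (i + 1) ((P 0).card - i)) ∨
      (j = 0 ∧
        IsOptimalLRC (MCC P (rectΔ i j)) ((i + 1) * (j + 1))
          (((P 0).card - i) * ((P 1).card - j)) 1 (P 1).card) ∨
      (i = (P 0).card - 1 ∧ 1 ≤ j ∧ j ≤ (P 1).card - 2 ∧
        IsOptimalLRC (MCC P (rectΔ i j)) ((i + 1) * (j + 1))
          (((P 0).card - i) * ((P 1).card - j)) (j + 1) ((P 1).card - j)))) := by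
  have hin : i < #(P 0) := by have := hP 0; omega
  have hjn : j < #(P 1) := by have := hP 1; omega
  have hcard : Fintype.card (MCCPt P) = #(P 0) * #(P 1) := by
    simp [MCCPt, Fintype.card_pi]
  refine ⟨hcard, finrank_MCC_rectΔ hin hjn, hasMinDist_MCC_rectΔ hin hjn, ?_⟩
  constructor
  · rintro (⟨hi₂, h⟩ | ⟨hj₂, h⟩)
    · rcases Nat.eq_zero_or_pos i with rfl | hi₀
      · exact Or.inl ⟨rfl, by simpa using h⟩
      · have hj₁ := (h.eq_zero_or_eq_sub_one rfl rfl hcard hin hjn).resolve_left hi₀.ne'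
        exact Or.inr (Or.inl ⟨hi₀, hi₂, hj₁, h⟩)
    · rcases Nat.eq_zero_or_pos j with rfl | hj₀
      · exact Or.inr (Or.inr (Or.inl ⟨rfl, by simpa using h⟩))
      · have hi₁ := (h.eq_zero_or_eq_sub_one (mul_comm _ _) (mul_comm _ _)
          (hcard.trans (mul_comm _ _)) hjn hin).resolve_left hj₀.ne'
        exact Or.inr (Or.inr (Or.inr ⟨hi₁, hj₀, hj₂, h⟩))
  · rintro (⟨rfl, h⟩ | ⟨-, hi₂, -, h⟩ | ⟨rfl, h⟩ | ⟨-, -, hj₂, h⟩)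
    · exact Or.inl ⟨Nat.zero_le _, by simpa using h⟩
    · exact Or.inl ⟨hi₂, h⟩
    · exact Or.inr ⟨Nat.zero_le _, by simpa using h⟩
    · exact Or.inr ⟨hj₂, h⟩

/-- For `m = 2` and the rectangle `Δ_{i,j}`, the code `C = C_{Δ_{i,j}}^P`
has length `n₁n₂`, dimension `(i+1)(j+1)` and minimum distance `(n₁-i)(n₂-j)`, and `C` is an
optimal `(r, δ)`-LRC for the locality coming from recovery along one coordinate direction if
and only if one of the four listed conditions holds, with the indicated localities. -/
theorem rect_mcc_optimal_iff
    {F : Type*} [Field F] [Fintype F] [DecidableEq F]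
    (P : Fin 2 → Finset F) (hP : ∀ j, 2 ≤ (P j).card)
    (i j : ℕ) (hi : i ≤ (P 0).card - 1) (hj : j ≤ (P 1).card - 1) :
    Fintype.card (MCCPt P) = (P 0).card * (P 1).card ∧
    Module.finrank F (MCC P (rectΔ i j)) = (i + 1) * (j + 1) ∧
    HasMinDist (MCC P (rectΔ i j)) (((P 0).card - i) * ((P 1).card - j)) ∧
    (((i ≤ (P 0).card - 2 ∧
        IsOptimalLRC (MCC P (rectΔ i j)) ((i + 1) * (j + 1))
          (((P 0).card - i) * ((P 1).card - j)) (i + 1) ((P 0).card - i)) ∨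
      (j ≤ (P 1).card - 2 ∧
        IsOptimalLRC (MCC P (rectΔ i j)) ((i + 1) * (j + 1))
          (((P 0).card - i) * ((P 1).card - j)) (j + 1) ((P 1).card - j))) ↔
    ((i = 0 ∧
        IsOptimalLRC (MCC P (rectΔ i j)) ((i + 1) * (j + 1))
          (((P 0).card - i) * ((P 1).card - j)) 1 (P 0).card) ∨
      (1 ≤ i ∧ i ≤ (P 0).card - 2 ∧ j = (P 1).card - 1 ∧
        IsOptimalLRC (MCC P (rectΔ i j)) ((i + 1) * (j + 1))
          (((P 0).card - i) * ((P 1).card - j)) (i + 1) ((P 0).card - i)) ∨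
      (j = 0 ∧
        IsOptimalLRC (MCC P (rectΔ i j)) ((i + 1) * (j + 1))
          (((P 0).card - i) * ((P 1).card - j)) 1 (P 1).card) ∨
      (i = (P 0).card - 1 ∧ 1 ≤ j ∧ j ≤ (P 1).card - 2 ∧
        IsOptimalLRC (MCC P (rectΔ i j)) ((i + 1) * (j + 1))
          (((P 0).card - i) * ((P 1).card - j)) (j + 1) ((P 1).card - j)))) :=
  rect_mcc_optimal_iff_general P hP i j hi hj
end

section
/- Let m = 2. For integers s, i with max{0, 2i−n_1} ≤ s < i ≤ n_1−2, let Δ := ({0,…,i} × {0,…,n_2−2}) ∪ ({0,…,s} × {n_2−1}) ⊆ E. Then the monomial-Cartesian code C_Δ^P is an optimal (r,δ)-LRC with (r,δ) = (i+1, n_1−i), dimension k = (i+1)(n_2−1)+s+1 and minimum distance d = n_1−s. Symmetrically, for max{0, 2j−n_2} ≤ s < j ≤ n_2−2 and Δ := ({0,…,n_1−2} × {0,…,j}) ∪ ({n_1−1} × {0,…,s}), the code C_Δ^P is an optimal (j+1, n_2−j)-LRC with k = (j+1)(n_1−1)+s+1 and d = n_2−s. -/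
/-- The set `Δ²_{i,s} = ({0,…,i} × {0,…,n₂-2}) ∪ ({0,…,s} × {n₂-1})`. -/
def Δ2 (i s n2 : ℕ) : Finset (Fin 2 → ℕ) :=
  ((Finset.range (i + 1) ×ˢ Finset.range (n2 - 1)).image fun p => ![p.1, p.2]) ∪
    ((Finset.range (s + 1) ×ˢ {n2 - 1}).image fun p => ![p.1, p.2])

/-- The symmetric set `Δ²σ_{j,s} = ({0,…,n₁-2} × {0,…,j}) ∪ ({n₁-1} × {0,…,s})`. -/
def Δ2σ (j s n1 : ℕ) : Finset (Fin 2 → ℕ) :=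
  ((Finset.range (n1 - 1) ×ˢ Finset.range (j + 1)).image fun p => ![p.1, p.2]) ∪
    (({n1 - 1} ×ˢ Finset.range (s + 1)).image fun p => ![p.1, p.2])

/-!
Identify `P₀ × P₁` with a grid `A × B ⊆ F × F` and write a codeword as
`c(x, y) = ∑_b Q_b(x) y^b`, where `deg Q_b ≤ i` for all `b` and `deg Q_{n₂-1} ≤ s`.
On a row `y = y₀` a codeword is a polynomial in `x` of degree `≤ i`, so the rows are recovery
sets with `δ = n₁ - i`. If `Q_b ≠ 0` and `e` is the `y`-degree of `c`, at least `n₁ - deg Q_b`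
columns carry a nonzero polynomial in `y` of degree `≤ e`, hence `wt c ≥ (n₁ - deg Q_b)(n₂ - e)`.
For `b = e` this is `≥ n₁ - s` if `e = n₂ - 1`, and `≥ 2(n₁ - i) ≥ n₁ - s` otherwise; the codeword
`∏_{t ∈ S} (x - t) · ∏_{t ∈ B, t ≠ β} (y - t)` with `#S = s` has weight exactly `n₁ - s`.
The monomials `x^a y^b` with `a < n₁`, `b < n₂` are linearly independent on the grid, so `k = #Δ`.
The second statement is the first one with the two coordinates exchanged.
-/

open Finset Polynomial
open scoped Polynomial.Bivariate

section Hamming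
variable {F : Type*} [Field F] [DecidableEq F]

theorem card_sub_natDegree_le_hammingNorm_eval (S : Finset F) {q : F[X]} (hq : q ≠ 0) :
    #S - q.natDegree ≤ hammingNorm fun x : S => q.eval (x : F) := by
  have hroots : #{x : S | q.eval (x : F) = 0} ≤ q.natDegree := by
    refine (card_map (Function.Embedding.subtype _)).symm.trans_le
      (card_le_degree_of_subset_roots fun a ha => ?_)
    obtain ⟨x, hx, rfl⟩ := mem_map.mp ha
    exact (mem_roots hq).mpr (mem_filter.mp hx).2
  have hsplit :=
    card_filter_add_card_filter_not (s := (univ : Finset S)) fun x => q.eval (x : F) = 0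
  rw [card_univ, Fintype.card_coe] at hsplit
  change _ ≤ #{x : S | ¬q.eval (x : F) = 0}
  omega

theorem hammingNorm_eval_nodal {A S : Finset F} (hSA : S ⊆ A) :
    hammingNorm (fun x : A => (Lagrange.nodal S id).eval (x : F)) = #A - #S := by
  have hS : (({x : A | (x : F) ∈ S} : Finset A).map (Function.Embedding.subtype _)) = S := by
    ext a
    simp only [mem_map, mem_filter, mem_univ, true_and, Function.Embedding.coe_subtype]
    exact ⟨fun ⟨x, hx, hxa⟩ => hxa ▸ hx, fun ha => ⟨⟨a, hSA ha⟩, ha, rfl⟩⟩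
  have hne : ∀ x : A, (Lagrange.nodal S id).eval (x : F) ≠ 0 ↔ (x : F) ∉ S := fun x =>
    ⟨fun h hx => h (Lagrange.eval_nodal_at_node (v := id) hx),
      fun h => Lagrange.eval_nodal_not_at_node fun t ht hxt => h (hxt ▸ ht)⟩
  have hsplit := card_filter_add_card_filter_not (s := (univ : Finset A)) fun x => (x : F) ∈ S
  rw [card_univ, Fintype.card_coe, ← card_map (Function.Embedding.subtype _), hS] at hsplit
  unfold hammingNorm
  simp only [hne]
  omega

theorem hammingNorm_fst_mul_snd {α β : Type*} [Fintype α] [Fintype β] (u : α → F) (v : β → F) :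
    hammingNorm (fun z : α × β => u z.1 * v z.2) = hammingNorm u * hammingNorm v := by
  unfold hammingNorm
  rw [← card_product, ← filter_product, univ_product_univ]
  simp only [ne_eq, mul_eq_zero, not_or]

theorem hammingNorm_eq_sum_hammingNorm {α β : Type*} [Fintype α] [Fintype β] (c : α × β → F) :
    hammingNorm c = ∑ x, hammingNorm fun y => c (x, y) := by
  simp only [hammingNorm, card_filter]
  rw [← univ_product_univ, sum_product]

end Hamming

section Reindex
variable {F ι κ : Type*} [Field F] [DecidableEq F] [Fintype ι] [Fintype κ]

theorem hammingNorm_comp_equiv (e : ι ≃ κ) (c : κ → F) : hammingNorm (c ∘ e) = hammingNorm c :=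
  card_equiv e (by simp)

variable (e : ι ≃ κ) {C : Submodule F (κ → F)}

theorem HasMinDist.map_funCongrLeft {d : ℕ} (h : HasMinDist C d) :
    HasMinDist (C.map (LinearEquiv.funCongrLeft F F e).toLinearMap) d := by
  obtain ⟨hlow, c, hc, hc0, hcd⟩ := h
  refine ⟨?_, c ∘ e, ⟨c, hc, rfl⟩, fun h0 => hc0 ?_, (hammingNorm_comp_equiv e c).trans hcd⟩
  · rintro _ ⟨c, hc, rfl⟩ hc0
    refine (hlow c hc fun h0 => hc0 ?_).trans_eq (hammingNorm_comp_equiv e c).symm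
    simp [h0]
  · ext x
    simpa using congrFun h0 (e.symm x)

variable [DecidableEq ι] [DecidableEq κ]

theorem IsLRC.map_funCongrLeft {r δ : ℕ} (h : IsLRC C r δ) :
    IsLRC (C.map (LinearEquiv.funCongrLeft F F e).toLinearMap) r δ := by
  intro i
  obtain ⟨R, hiR, hRcard, hR⟩ := h (e i)
  refine ⟨R.map e.symm.toEmbedding, by simpa using hiR, by rwa [card_map], ?_⟩
  rintro _ ⟨c, hc, rfl⟩ ⟨j, hj, hcj⟩
  obtain ⟨k, hk, rfl⟩ := mem_map.mp hj
  rw [filter_map, card_map]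
  simpa [Function.comp_def] using hR c hc ⟨k, hk, by simpa using hcj⟩

theorem IsOptimalLRC.map_funCongrLeft {k d r δ : ℕ} (h : IsOptimalLRC C k d r δ) :
    IsOptimalLRC (C.map (LinearEquiv.funCongrLeft F F e).toLinearMap) k d r δ := by
  obtain ⟨hlrc, hk, hd, hbound⟩ := h
  exact ⟨hlrc.map_funCongrLeft e, by rwa [LinearEquiv.finrank_map_eq], hd.map_funCongrLeft e,
    by rwa [Fintype.card_congr e]⟩

end Reindex

section Grid
variable {F : Type*} [Field F] (A B : Finset F)

def gridMonomial (ab : ℕ × ℕ) : A × B → F := fun z => (z.1 : F) ^ ab.1 * (z.2 : F) ^ ab.2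

def gridCode (Δ : Finset (ℕ × ℕ)) : Submodule F (A × B → F) :=
  Submodule.span F (gridMonomial A B '' Δ)

/-- `(a, b) ∈ Δ` stands for the monomial `X ^ a * Y ^ b`, `Y` being the outer variable. -/
def SupportedIn (Δ : Finset (ℕ × ℕ)) (p : F[X][Y]) : Prop :=
  ∀ a b, (p.coeff b).coeff a ≠ 0 → (a, b) ∈ Δ

theorem evalEval_monomial_monomial (x y r : F) (a b : ℕ) :
    (monomial b (monomial a r)).evalEval x y = r * x ^ a * y ^ b := by
  simp [evalEval]

theorem mem_gridCode_iff {Δ : Finset (ℕ × ℕ)} {c : A × B → F} :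
    c ∈ gridCode A B Δ ↔ ∃ p : F[X][Y], SupportedIn Δ p ∧ c = fun z => p.evalEval z.1 z.2 := by
  constructor
  · intro hc
    induction hc using Submodule.span_induction with
    | mem c hc =>
      obtain ⟨ab, hab, rfl⟩ := hc
      refine ⟨monomial ab.2 (monomial ab.1 1), fun a b h => ?_, ?_⟩
      · obtain rfl : ab.2 = b := by by_contra hb; simp [coeff_monomial, hb] at h
        obtain rfl : ab.1 = a := by by_contra ha; simp [coeff_monomial, ha] at h
        exact hab
      · ext z
        simp [gridMonomial, evalEval_monomial_monomial]
    | zero => exact ⟨0, fun a b h => by simp at h, by ext; simp⟩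
    | add c d _ _ hc hd =>
      obtain ⟨p, hp, rfl⟩ := hc
      obtain ⟨q, hq, rfl⟩ := hd
      refine ⟨p + q, fun a b h => ?_, by ext; simp⟩
      by_cases hpab : (p.coeff b).coeff a = 0
      · exact hq a b (by simpa [hpab] using h)
      · exact hp a b hpab
    | smul r c _ hc =>
      obtain ⟨p, hp, rfl⟩ := hc
      refine ⟨r • p, fun a b h => hp a b fun h0 => h (by simp [h0]), by ext; simp⟩
  · rintro ⟨p, hp, rfl⟩
    have hsum : (fun z : A × B => p.evalEval (z.1 : F) z.2) = ∑ b ∈ p.support,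
        ∑ a ∈ (p.coeff b).support, (p.coeff b).coeff a • gridMonomial A B (a, b) := by
      ext z
      rw [evalEval, eval_eq_sum (p := p), Polynomial.sum_def, eval_finsetSum, Finset.sum_apply]
      refine sum_congr rfl fun b _ => ?_
      rw [eval_mul, eval_pow, eval_C, eval_eq_sum, Polynomial.sum_def, sum_mul, Finset.sum_apply]
      refine sum_congr rfl fun a _ => ?_
      simp only [gridMonomial, Pi.smul_apply, smul_eq_mul]
      ring
    rw [hsum]
    exact Submodule.sum_mem _ fun b _ => Submodule.sum_mem _ fun a ha =>
      Submodule.smul_mem _ _ (Submodule.subset_span ⟨(a, b), hp a b (mem_support_iff.mp ha), rfl⟩)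

end Grid

section GridDim
variable {F : Type*} [Field F] (A B : Finset F)

theorem eq_zero_of_evalEval_eq_zero {p : F[X][Y]} (hX : ∀ b, (p.coeff b).degree < #A)
    (hY : p.degree < #B) (h : ∀ x ∈ A, ∀ y ∈ B, p.evalEval x y = 0) : p = 0 := by
  ext b : 1
  refine eq_zero_of_degree_lt_of_eval_finset_eq_zero _ (hX b) fun x hx => ?_
  have hcol : p.map (evalRingHom x) = 0 :=
    eq_zero_of_degree_lt_of_eval_finset_eq_zero _ (degree_map_le.trans_lt hY)
      fun y hy => (map_evalRingHom_eval x y p).trans (h x hx y hy)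
  simpa using congrArg (coeff · b) hcol

theorem coeff_coeff_sum_monomial_monomial (Δ : Finset (ℕ × ℕ)) (f : ℕ × ℕ → F) (a b : ℕ) :
    ((∑ ab ∈ Δ, monomial ab.2 (monomial ab.1 (f ab))).coeff b).coeff a =
      if (a, b) ∈ Δ then f (a, b) else 0 := by
  rw [← sum_ite_eq' Δ (a, b) f, finsetSum_coeff, finsetSum_coeff]
  refine sum_congr rfl fun ⟨a', b'⟩ _ => ?_
  by_cases ha : a' = a <;> by_cases hb : b' = b <;> simp [coeff_monomial, ha, hb]

theorem linearIndepOn_gridMonomial {Δ : Finset (ℕ × ℕ)} (hΔ : Δ ⊆ range #A ×ˢ range #B) :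
    LinearIndepOn F (gridMonomial A B) (Δ : Set (ℕ × ℕ)) := by
  rw [linearIndepOn_finset_iff]
  intro f hf ab hab
  set p : F[X][Y] := ∑ ab ∈ Δ, monomial ab.2 (monomial ab.1 (f ab))
  have hcoeff : ∀ a b, (p.coeff b).coeff a = if (a, b) ∈ Δ then f (a, b) else 0 :=
    coeff_coeff_sum_monomial_monomial Δ f
  have hp : p = 0 := by
    refine eq_zero_of_evalEval_eq_zero A B (fun b => ?_) ?_ fun x hx y hy => ?_
    · rw [degree_lt_iff_coeff_zero]
      intro a ha
      rw [hcoeff, if_neg fun h => by simpa [ha.not_gt] using hΔ h]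
    · rw [degree_lt_iff_coeff_zero]
      intro b hb
      ext a
      rw [hcoeff, if_neg fun h => by simpa [hb.not_gt] using hΔ h, coeff_zero]
    · simpa [p, evalEval_finsetSum, evalEval_monomial_monomial, gridMonomial, mul_assoc]
        using congrFun hf (⟨x, hx⟩, ⟨y, hy⟩)
  simpa [hp, hab] using (hcoeff ab.1 ab.2).symm

theorem finrank_gridCode {Δ : Finset (ℕ × ℕ)} (hΔ : Δ ⊆ range #A ×ˢ range #B) :
    Module.finrank F (gridCode A B Δ) = #Δ := by
  rw [gridCode, Set.image_eq_range, finrank_span_eq_card (linearIndepOn_gridMonomial A B hΔ)]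
  simp

end GridDim

section GridWeight
variable {F : Type*} [Field F] [DecidableEq F] (A B : Finset F)

theorem mul_le_hammingNorm_evalEval (p : F[X][Y]) {b : ℕ} (hb : p.coeff b ≠ 0) :
    (#A - (p.coeff b).natDegree) * (#B - p.natDegree) ≤
      hammingNorm fun z : A × B => p.evalEval (z.1 : F) z.2 := by
  set T : Finset A := {x | (p.coeff b).eval (x : F) ≠ 0}
  have hT : #A - (p.coeff b).natDegree ≤ #T := card_sub_natDegree_le_hammingNorm_eval A hb
  have hcol : ∀ x ∈ T, #B - p.natDegree ≤ hammingNorm fun y : B => p.evalEval (x : F) y := by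
    intro x hx
    have hx0 : p.map (evalRingHom (x : F)) ≠ 0 := fun h =>
      (mem_filter.mp hx).2 (by simpa using congrArg (coeff · b) h)
    simp only [← map_evalRingHom_eval]
    exact (Nat.sub_le_sub_left natDegree_map_le _).trans
      (card_sub_natDegree_le_hammingNorm_eval B hx0)
  calc _ ≤ #T * (#B - p.natDegree) := Nat.mul_le_mul_right _ hT
    _ = ∑ _x ∈ T, (#B - p.natDegree) := by rw [sum_const, smul_eq_mul]
    _ ≤ ∑ x ∈ T, hammingNorm fun y : B => p.evalEval (x : F) y := sum_le_sum hcol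
    _ ≤ ∑ x : A, hammingNorm fun y : B => p.evalEval (x : F) y :=
        sum_le_sum_of_subset (subset_univ T)
    _ = _ := (hammingNorm_eq_sum_hammingNorm fun z : A × B => p.evalEval (z.1 : F) z.2).symm

end GridWeight

section Support
variable {F : Type*} [Field F] {Δ : Finset (ℕ × ℕ)} {p : F[X][Y]}

theorem SupportedIn.natDegree_coeff_le {b d : ℕ} (hp : SupportedIn Δ p)
    (h : ∀ a, (a, b) ∈ Δ → a ≤ d) : (p.coeff b).natDegree ≤ d :=
  natDegree_le_iff_coeff_eq_zero.mpr fun a ha => by_contra fun hne => (h a (hp a b hne)).not_gt ha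

theorem SupportedIn.natDegree_le {d : ℕ} (hp : SupportedIn Δ p) (h : ∀ a b, (a, b) ∈ Δ → b ≤ d) :
    p.natDegree ≤ d :=
  natDegree_le_iff_coeff_eq_zero.mpr fun b hb => Polynomial.ext fun a =>
    by_contra fun hne => (h a b (hp a b hne)).not_gt hb

theorem natDegree_eval_C_le {d : ℕ} (h : ∀ b, (p.coeff b).natDegree ≤ d) (y : F) :
    (p.eval (C y)).natDegree ≤ d := by
  rw [eval_eq_sum_range]
  exact natDegree_sum_le_of_forall_le _ _ fun b _ => by
    rw [← C_pow]
    exact (natDegree_mul_C_le _ _).trans (h b)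

theorem supportedIn_C_mul_map_C {g h : F[X]}
    (hΔ : ∀ a b, a ≤ g.natDegree → b ≤ h.natDegree → (a, b) ∈ Δ) :
    SupportedIn Δ (C g * h.map C) := by
  intro a b hab
  rw [coeff_C_mul, coeff_map, coeff_mul_C] at hab
  exact hΔ a b (le_natDegree_of_ne_zero (left_ne_zero_of_mul hab))
    (le_natDegree_of_ne_zero (right_ne_zero_of_mul hab))

end Support

def Δ2Pairs (i s n : ℕ) : Finset (ℕ × ℕ) :=
  range (i + 1) ×ˢ range (n - 1) ∪ range (s + 1) ×ˢ {n - 1}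

theorem mem_Δ2Pairs {i s n a b : ℕ} :
    (a, b) ∈ Δ2Pairs i s n ↔ a ≤ i ∧ b < n - 1 ∨ a ≤ s ∧ b = n - 1 := by
  simp only [Δ2Pairs, mem_union, mem_product, mem_range, mem_singleton]
  omega

theorem card_Δ2Pairs (i s n : ℕ) : #(Δ2Pairs i s n) = (i + 1) * (n - 1) + s + 1 := by
  rw [Δ2Pairs, card_union_of_disjoint, card_product, card_product, card_range, card_range,
    card_range, card_singleton, mul_one, add_assoc]
  rw [disjoint_left]
  rintro ⟨a, b⟩ h h'
  simp only [mem_product, mem_range, mem_singleton] at h h'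
  omega

theorem singleton_bound_eq {nA nB i s : ℕ} (hB : 1 ≤ nB) (hsi : s ≤ i) (hi : i < nA) :
    (i + 1) * (nB - 1) + s + 1 + (nA - s) +
      (((i + 1) * (nB - 1) + s + 1 + (i + 1) - 1) / (i + 1) - 1) * (nA - i - 1) = nA * nB + 1 := by
  obtain ⟨m, rfl⟩ : ∃ m, nB = m + 1 := ⟨nB - 1, by omega⟩
  obtain ⟨t, rfl⟩ : ∃ t, nA = i + 1 + t := ⟨nA - i - 1, by omega⟩
  obtain ⟨u, rfl⟩ : ∃ u, i = s + u := ⟨i - s, by omega⟩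
  -- `⌈k / r⌉ = nB` because `s < r`
  have hnum : (s + u + 1) * (m + 1 - 1) + s + 1 + (s + u + 1) - 1 = (s + u + 1) * (m + 1) + s := by
    rw [Nat.add_sub_cancel, Nat.mul_succ]
    omega
  rw [hnum, Nat.mul_add_div (by omega), Nat.div_eq_of_lt (by omega), Nat.add_sub_cancel,
    show s + u + 1 + t - s = u + 1 + t by omega,
    show s + u + 1 + t - (s + u) - 1 = t by omega]
  ring

section RectElim
variable {F : Type*} [Field F] [DecidableEq F] (A B : Finset F) {i s : ℕ}

theorem isLRC_gridCode_Δ2Pairs (hsi : s ≤ i) :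
    IsLRC (gridCode A B (Δ2Pairs i s #B)) (i + 1) (#A - i) := by
  intro z
  refine ⟨univ ×ˢ {z.2}, by simp, ?_, ?_⟩
  · rw [card_product, card_univ, Fintype.card_coe, card_singleton]
    omega
  rintro c hc ⟨w, hw, hcw⟩
  obtain ⟨p, hp, rfl⟩ := (mem_gridCode_iff A B).mp hc
  have hw2 : w.2 = z.2 := (mem_singleton.mp (mem_product.mp hw).2)
  have hq : p.eval (C (z.2 : F)) ≠ 0 := fun h => hcw (by
    change eval _ (eval (C _) p) = 0
    rw [hw2, h, eval_zero])
  have hdeg : (p.eval (C (z.2 : F))).natDegree ≤ i := natDegree_eval_C_le (fun b =>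
    hp.natDegree_coeff_le fun a hab => by rw [mem_Δ2Pairs] at hab; omega) _
  rw [product_singleton, filter_map, card_map]
  exact (Nat.sub_le_sub_left hdeg _).trans (card_sub_natDegree_le_hammingNorm_eval A hq)

theorem le_hammingNorm_of_mem_gridCode_Δ2Pairs (hB : B.Nonempty) (hs : 2 * i - #A ≤ s)
    {c : A × B → F} (hc : c ∈ gridCode A B (Δ2Pairs i s #B)) (hc0 : c ≠ 0) :
    #A - s ≤ hammingNorm c := by
  obtain ⟨p, hp, rfl⟩ := (mem_gridCode_iff A B).mp hc
  have hp0 : p ≠ 0 := by rintro rfl; exact hc0 (by ext; simp)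
  have hlead : p.coeff p.natDegree ≠ 0 := leadingCoeff_ne_zero.mpr hp0
  have hweight := mul_le_hammingNorm_evalEval A B p hlead
  have hB1 : 1 ≤ #B := card_pos.mpr hB
  have hdeg : p.natDegree ≤ #B - 1 := hp.natDegree_le fun a b hab => by
    rw [mem_Δ2Pairs] at hab; omega
  rcases hdeg.eq_or_lt with htop | hlow
  · have hdegX : (p.coeff p.natDegree).natDegree ≤ s := hp.natDegree_coeff_le fun a hab => by
      rw [mem_Δ2Pairs] at hab; omega
    calc #A - s = (#A - s) * (#B - (#B - 1)) := by rw [Nat.sub_sub_self hB1, Nat.mul_one]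
      _ ≤ _ := by rw [← htop]; exact (Nat.mul_le_mul_right _ (by omega)).trans hweight
  · have hdegX : (p.coeff p.natDegree).natDegree ≤ i := hp.natDegree_coeff_le fun a hab => by
      rw [mem_Δ2Pairs] at hab; omega
    calc #A - s ≤ (#A - i) * 2 := by omega
      _ ≤ _ := (Nat.mul_le_mul (by omega) (by omega)).trans hweight

theorem exists_mem_gridCode_Δ2Pairs_hammingNorm_eq (hB : B.Nonempty) (hsi : s ≤ i)
    (hsA : s ≤ #A) : ∃ c ∈ gridCode A B (Δ2Pairs i s #B), hammingNorm c = #A - s := by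
  obtain ⟨S, hSA, hS⟩ := exists_subset_card_eq hsA
  obtain ⟨β, hβ⟩ := hB
  set g := Lagrange.nodal S id
  set h := Lagrange.nodal (B.erase β) id
  refine ⟨fun z => g.eval (z.1 : F) * h.eval (z.2 : F), (mem_gridCode_iff A B).mpr
    ⟨C g * h.map C, supportedIn_C_mul_map_C fun a b ha hb => ?_, ?_⟩, ?_⟩
  · rw [Lagrange.natDegree_nodal, hS] at ha
    rw [Lagrange.natDegree_nodal, card_erase_of_mem hβ] at hb
    rw [mem_Δ2Pairs]
    omega
  · ext z
    simp [evalEval_mul, evalEval_C, evalEval_map_C]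
  · rw [hammingNorm_fst_mul_snd (fun x : A => g.eval (x : F)) (fun y : B => h.eval (y : F)),
      hammingNorm_eval_nodal hSA, hammingNorm_eval_nodal (erase_subset β B),
      card_erase_of_mem hβ, hS, Nat.sub_sub_self (card_pos.mpr ⟨β, hβ⟩), Nat.mul_one]

theorem hasMinDist_gridCode_Δ2Pairs (hB : B.Nonempty) (hs : 2 * i - #A ≤ s) (hsi : s ≤ i)
    (hsA : s < #A) : HasMinDist (gridCode A B (Δ2Pairs i s #B)) (#A - s) := by
  obtain ⟨c, hc, hcw⟩ := exists_mem_gridCode_Δ2Pairs_hammingNorm_eq A B hB hsi hsA.le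
  refine ⟨fun c hc hc0 => le_hammingNorm_of_mem_gridCode_Δ2Pairs A B hB hs hc hc0,
    c, hc, fun h0 => ?_, hcw⟩
  rw [h0, hammingNorm_zero] at hcw
  omega

theorem isOptimalLRC_gridCode_Δ2Pairs (hB : B.Nonempty) (hs : 2 * i - #A ≤ s) (hsi : s ≤ i)
    (hi : i < #A) :
    IsOptimalLRC (gridCode A B (Δ2Pairs i s #B))
      ((i + 1) * (#B - 1) + s + 1) (#A - s) (i + 1) (#A - i) := by
  have hB1 : 1 ≤ #B := card_pos.mpr hB
  have hΔ : Δ2Pairs i s #B ⊆ range #A ×ˢ range #B := fun ⟨a, b⟩ hab => by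
    rw [mem_Δ2Pairs] at hab
    simp only [mem_product, mem_range]
    omega
  refine ⟨isLRC_gridCode_Δ2Pairs A B hsi, by rw [finrank_gridCode A B hΔ, card_Δ2Pairs],
    hasMinDist_gridCode_Δ2Pairs A B hB hs hsi (by omega), ?_⟩
  rw [Fintype.card_prod, Fintype.card_coe, Fintype.card_coe]
  exact singleton_bound_eq hB1 hsi hi

end RectElim

section MCCGrid
variable {F : Type*} [Field F]

theorem MCC_image_eq_map {m : ℕ} (P : Fin m → Finset F) {A B : Finset F} (e : MCCPt P ≃ A × B)
    (f : ℕ × ℕ → Fin m → ℕ) (hf : ∀ ab, evMon P (f ab) = gridMonomial A B ab ∘ e)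
    (Δ : Finset (ℕ × ℕ)) :
    MCC P (Δ.image f) = (gridCode A B Δ).map (LinearEquiv.funCongrLeft F F e).toLinearMap := by
  rw [MCC, gridCode, Submodule.map_span, coe_image, Set.image_image, Set.image_image]
  exact congrArg _ (Set.image_congr fun ab _ => hf ab)

variable (P : Fin 2 → Finset F)

theorem MCC_Δ2_eq_map (i s n : ℕ) :
    MCC P (Δ2 i s n) = (gridCode (P 0) (P 1) (Δ2Pairs i s n)).map
      (LinearEquiv.funCongrLeft F F (piFinTwoEquiv _)).toLinearMap := by
  rw [show Δ2 i s n = (Δ2Pairs i s n).image fun ab => ![ab.1, ab.2] by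
    rw [Δ2Pairs, image_union]; rfl]
  exact MCC_image_eq_map P _ _ (fun ab => by
    ext x; simp [evMon, gridMonomial, Fin.prod_univ_two, piFinTwoEquiv]) _

theorem MCC_Δ2σ_eq_map (j s n : ℕ) :
    MCC P (Δ2σ j s n) = (gridCode (P 1) (P 0) (Δ2Pairs j s n)).map
      (LinearEquiv.funCongrLeft F F
        ((piFinTwoEquiv _).trans (Equiv.prodComm _ _))).toLinearMap := by
  rw [show Δ2σ j s n = (Δ2Pairs j s n).image fun ab => ![ab.2, ab.1] by
    rw [Δ2σ, Δ2Pairs, image_union, ← image_swap_product, ← image_swap_product (range (s + 1)),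
      image_image, image_image]
    rfl]
  exact MCC_image_eq_map P _ _ (fun ab => by
    ext x; simp [evMon, gridMonomial, Fin.prod_univ_two, piFinTwoEquiv, mul_comm]) _

end MCCGrid

theorem mcc_rectelim_optimal_general
    {F : Type*} [Field F] [DecidableEq F]
    (P : Fin 2 → Finset F)
    (i s : ℕ) (hs : 2 * i - (P 0).card ≤ s) (hsi : s < i) (hi : i ≤ (P 0).card - 2)
    (j s' : ℕ) (hs' : 2 * j - (P 1).card ≤ s') (hsj : s' < j) (hj : j ≤ (P 1).card - 2) :
    IsOptimalLRC (MCC P (Δ2 i s (P 1).card))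
      ((i + 1) * ((P 1).card - 1) + s + 1) ((P 0).card - s) (i + 1) ((P 0).card - i) ∧
    IsOptimalLRC (MCC P (Δ2σ j s' (P 0).card))
      ((j + 1) * ((P 0).card - 1) + s' + 1) ((P 1).card - s') (j + 1) ((P 1).card - j) := by
  constructor
  · rw [MCC_Δ2_eq_map]
    exact (isOptimalLRC_gridCode_Δ2Pairs (P 0) (P 1) (card_pos.mp (by omega)) hs hsi.le
      (by omega)).map_funCongrLeft _
  · rw [MCC_Δ2σ_eq_map]
    exact (isOptimalLRC_gridCode_Δ2Pairs (P 1) (P 0) (card_pos.mp (by omega)) hs' hsj.le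
      (by omega)).map_funCongrLeft _

/-- For `max{0, 2i-n₁} ≤ s < i ≤ n₁-2`, the monomial-Cartesian code on
`Δ²_{i,s}` is an optimal `(i+1, n₁-i)`-LRC with dimension `(i+1)(n₂-1)+s+1` and minimum
distance `n₁-s`; symmetrically for `max{0, 2j-n₂} ≤ s' < j ≤ n₂-2` and `Δ²σ_{j,s'}`, with
locality `(j+1, n₂-j)`, dimension `(j+1)(n₁-1)+s'+1` and minimum distance `n₂-s'`. -/
theorem mcc_rectelim_optimal
    {F : Type*} [Field F] [Fintype F] [DecidableEq F]
    (P : Fin 2 → Finset F) (hP : ∀ j, 2 ≤ (P j).card)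
    (i s : ℕ) (hs : 2 * i - (P 0).card ≤ s) (hsi : s < i) (hi : i ≤ (P 0).card - 2)
    (j s' : ℕ) (hs' : 2 * j - (P 1).card ≤ s') (hsj : s' < j) (hj : j ≤ (P 1).card - 2) :
    IsOptimalLRC (MCC P (Δ2 i s (P 1).card))
      ((i + 1) * ((P 1).card - 1) + s + 1) ((P 0).card - s) (i + 1) ((P 0).card - i) ∧
    IsOptimalLRC (MCC P (Δ2σ j s' (P 0).card))
      ((j + 1) * ((P 0).card - 1) + s' + 1) ((P 1).card - s') (j + 1) ((P 1).card - j) :=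
  mcc_rectelim_optimal_general P i s hs hsi hi j s' hs' hsj hj
end

section
/- Let m ≥ 3. Fix j_0 ∈ {1,…,m}, let Δ¹ := {(e_1,…,e_m) : 0 ≤ e_{j_0} ≤ i_{j_0}, and 0 ≤ e_j ≤ n_j−1 for j ≠ j_0}, and let Δ := Δ¹ \ {(n_1−1,…,n_{j_0−1}−1, e_{j_0}, n_{j_0+1}−1,…,n_m−1) : s ≤ e_{j_0} ≤ i_{j_0}}, where either max{1, 2i_{j_0}−n_{j_0}+1} ≤ s ≤ i_{j_0} ≤ n_{j_0}−2 or i_{j_0} = s = 0. Then the monomial-Cartesian code C_Δ^P is an optimal (r,δ)-LRC with (r,δ) = (i_{j_0}+1, n_{j_0}−i_{j_0}), dimension k = (i_{j_0}+1)∏_{j≠j_0} n_j − (i_{j_0}−s+1), and minimum distance d = n_{j_0}−s+1 if s ≥ 1 and d = 2n_{j_0} if s = 0. -/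
/-- The box `Δ¹ = {(e₁,…,e_m) : 0 ≤ e_j ≤ i_j for all j}`. -/
def boxΔ {m : ℕ} (i : Fin m → ℕ) : Finset (Fin m → ℕ) :=
  Fintype.piFinset fun j => Finset.range (i j + 1)

open Finset Polynomial Lagrange

section OneVariable

variable {R : Type*} [CommRing R] [IsDomain R] [DecidableEq R]

theorem natDegree_nodal_sdiff_singleton {S : Finset R} {b : R} (hb : b ∈ S) :
    (nodal (S \ {b}) id).natDegree = #S - 1 := by
  rw [natDegree_nodal, card_sdiff_of_subset (singleton_subset_iff.2 hb), card_singleton]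

theorem eval_nodal_sdiff_singleton_eq_zero_iff {S : Finset R} {a b : R} (ha : a ∈ S) :
    (nodal (S \ {b}) id).eval a = 0 ↔ a ≠ b := by
  simp only [eval_nodal, prod_eq_zero_iff, sub_eq_zero, id, mem_sdiff, mem_singleton]
  exact ⟨fun ⟨_, ⟨_, hb⟩, h⟩ hab => hb (h ▸ hab), fun hab => ⟨a, ⟨ha, hab⟩, rfl⟩⟩

theorem card_sub_natDegree_le_card_filter_eval_ne_zero (S : Finset R) {q : R[X]} (hq : q ≠ 0) :
    #S - q.natDegree ≤ #{v : S | q.eval (v : R) ≠ 0} := by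
  have hroots : #{v : S | q.eval (v : R) = 0} ≤ q.natDegree := by
    rw [← card_map (Function.Embedding.subtype _)]
    refine card_le_degree_of_subset_roots fun a ha => ?_
    obtain ⟨v, hv, rfl⟩ := mem_map.1 ha
    exact (mem_roots hq).2 (mem_filter.1 hv).2
  have := card_filter_add_card_filter_not (s := (univ : Finset S))
    (fun v : S => q.eval (v : R) = 0)
  simp only [card_univ, Fintype.card_coe, ne_eq] at this ⊢
  omega

end OneVariable

section Grid

variable {F : Type*} [Field F] {m : ℕ} (P : Fin m → Finset F)

def fullBox : Finset (Fin m → ℕ) := boxΔ fun j => (P j).card - 1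

noncomputable def prodEval (p : Fin m → F[X]) : MCCPt P → F :=
  fun x => ∏ j, (p j).eval (x j : F)

theorem mem_boxΔ {i e : Fin m → ℕ} : e ∈ boxΔ i ↔ ∀ j, e j ≤ i j := by
  simp [boxΔ]

theorem card_boxΔ (i : Fin m → ℕ) : #(boxΔ i) = ∏ j, (i j + 1) := by
  simp [boxΔ]

theorem prodEval_eq_sum {p : Fin m → F[X]} {d : Fin m → ℕ} (hd : ∀ j, (p j).natDegree ≤ d j) :
    prodEval P p = ∑ e ∈ boxΔ d, (∏ j, (p j).coeff (e j)) • evMon P e := by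
  funext x
  simp only [prodEval, evMon, Finset.sum_apply, Pi.smul_apply, smul_eq_mul, ← prod_mul_distrib]
  simp_rw [eval_eq_sum_range' (Nat.lt_succ_of_le (hd _))]
  exact prod_univ_sum _ _

variable {P}

theorem prodEval_mem_MCC {p : Fin m → F[X]} {Δ : Finset (Fin m → ℕ)}
    (hΔ : boxΔ (fun j => (p j).natDegree) ⊆ Δ) : prodEval P p ∈ MCC P Δ := by
  rw [prodEval_eq_sum P fun j => le_rfl]
  exact Submodule.sum_mem _ fun e he =>
    Submodule.smul_mem _ _ (Submodule.subset_span ⟨e, hΔ he, rfl⟩)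

theorem range_evMon_coe (Δ : Finset (Fin m → ℕ)) :
    Set.range (fun e : Δ => evMon P e) = evMon P '' Δ :=
  (Set.image_eq_range _ _).symm

section Nodal

variable [DecidableEq F]

theorem prodEval_nodal_ne_zero_iff (T : Fin m → Finset F) (x : MCCPt P) :
    prodEval P (fun j => nodal (P j \ T j) id) x ≠ 0 ↔ ∀ j, (x j : F) ∈ T j := by
  simp only [prodEval, prod_ne_zero_iff, mem_univ, true_implies, eval_nodal, id, sub_ne_zero]
  refine forall_congr' fun j => ⟨fun h => ?_, fun h b hb => ?_⟩
  · by_contra hx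
    exact h _ (mem_sdiff.2 ⟨(x j).2, hx⟩) rfl
  · rintro rfl
    exact (mem_sdiff.1 hb).2 h

theorem hammingNorm_prodEval_nodal {T : Fin m → Finset F} (hT : ∀ j, T j ⊆ P j) :
    hammingNorm (prodEval P fun j => nodal (P j \ T j) id) = ∏ j, #(T j) := by
  have hsupp : ({x | prodEval P (fun j => nodal (P j \ T j) id) x ≠ 0} : Finset (MCCPt P)) =
      Fintype.piFinset fun j => (T j).subtype (· ∈ P j) := by
    ext x
    simp [prodEval_nodal_ne_zero_iff]
  rw [hammingNorm, hsupp, Fintype.card_piFinset]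
  refine prod_congr rfl fun j _ => ?_
  rw [card_subtype, filter_true_of_mem fun b hb => hT j hb]

theorem exists_mem_MCC_hammingNorm_eq {Δ : Finset (Fin m → ℕ)} {k : Fin m → ℕ}
    (hk : ∀ j, k j ≤ #(P j)) (hΔ : boxΔ (fun j => #(P j) - k j) ⊆ Δ) :
    ∃ c ∈ MCC P Δ, hammingNorm c = ∏ j, k j := by
  choose T hTP hTk using fun j => exists_subset_card_eq (hk j)
  refine ⟨_, prodEval_mem_MCC ?_, (hammingNorm_prodEval_nodal hTP).trans (by simp [hTk])⟩
  simpa [natDegree_nodal, card_sdiff_of_subset, hTP, hTk] using hΔ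

end Nodal

theorem MCC_fullBox_eq_top : MCC P (fullBox P) = ⊤ := by
  classical
  rw [eq_top_iff, ← (Pi.basisFun F (MCCPt P)).span_eq, Submodule.span_le]
  rintro _ ⟨y, rfl⟩
  set ι := prodEval P fun j => nodal (P j \ {(y j : F)}) id
  have hι : ∀ x, ι x ≠ 0 ↔ x = y := fun x => by
    simp only [ι, prodEval_nodal_ne_zero_iff, mem_singleton, funext_iff, Subtype.ext_iff]
  have hmem : ι ∈ MCC P (fullBox P) := prodEval_mem_MCC fun e he => by
    simpa only [mem_boxΔ, fullBox, natDegree_nodal_sdiff_singleton (y _).2] using he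
  rw [SetLike.mem_coe, Pi.basisFun_apply]
  convert Submodule.smul_mem _ (ι y)⁻¹ hmem using 1
  funext x
  by_cases hx : x = y
  · subst hx
    simp [inv_mul_cancel₀ ((hι x).2 rfl)]
  · simp [hx, not_not.1 (mt (hι x).1 hx)]

theorem linearIndependent_evMon_fullBox (hP : ∀ j, (P j).Nonempty) :
    LinearIndependent F fun e : fullBox P => evMon P e := by
  rw [linearIndependent_iff_card_eq_finrank_span, Set.finrank, range_evMon_coe, ← MCC,
    MCC_fullBox_eq_top, finrank_top, Module.finrank_fintype_fun_eq_card, Fintype.card_coe,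
    fullBox, card_boxΔ, Fintype.card_pi]
  exact prod_congr rfl fun j _ => by simp [Nat.sub_add_cancel (hP j).card_pos]

noncomputable def monomialBasis (hP : ∀ j, (P j).Nonempty) :
    Module.Basis (fullBox P) F (MCCPt P → F) :=
  Module.Basis.mk (linearIndependent_evMon_fullBox hP) <| by
    rw [range_evMon_coe, ← MCC, MCC_fullBox_eq_top]

@[simp]
theorem monomialBasis_apply (hP : ∀ j, (P j).Nonempty) (e : fullBox P) :
    monomialBasis hP e = evMon P e :=
  Module.Basis.mk_apply ..

theorem finrank_MCC (hP : ∀ j, (P j).Nonempty) {Δ : Finset (Fin m → ℕ)} (hΔ : Δ ⊆ fullBox P) :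
    Module.finrank F (MCC P Δ) = #Δ := by
  have hli : LinearIndependent F fun e : Δ => evMon P e :=
    (linearIndependent_evMon_fullBox hP).comp (fun e : Δ => (⟨e, hΔ e.2⟩ : fullBox P))
      fun _ _ h => Subtype.ext (congrArg Subtype.val h :)
  rw [MCC, ← range_evMon_coe, finrank_span_eq_card hli, Fintype.card_coe]

theorem monomialBasis_repr_prodEval (hP : ∀ j, (P j).Nonempty) {p : Fin m → F[X]}
    (hp : ∀ j, (p j).natDegree ≤ (P j).card - 1) (e : fullBox P) :
    (monomialBasis hP).repr (prodEval P p) e = ∏ j, (p j).coeff ((e : Fin m → ℕ) j) := by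
  rw [prodEval_eq_sum P hp, ← fullBox, ← sum_coe_sort (fullBox P)]
  simp_rw [← monomialBasis_apply hP]
  rw [Module.Basis.repr_sum_self]

theorem monomialBasis_repr_eq_zero_of_mem_MCC (hP : ∀ j, (P j).Nonempty) {Δ : Finset (Fin m → ℕ)}
    (hΔ : Δ ⊆ fullBox P) {c : MCCPt P → F} (hc : c ∈ MCC P Δ) {e : fullBox P}
    (he : (e : Fin m → ℕ) ∉ Δ) : (monomialBasis hP).repr c e = 0 := by
  suffices MCC P Δ ≤ LinearMap.ker ((monomialBasis hP).coord e) from this hc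
  refine Submodule.span_le.2 ?_
  rintro _ ⟨e', he', rfl⟩
  have : evMon P e' = monomialBasis hP ⟨e', hΔ he'⟩ := (monomialBasis_apply hP ⟨e', _⟩).symm
  simp only [SetLike.mem_coe, LinearMap.mem_ker, Module.Basis.coord_apply, this,
    Module.Basis.repr_self]
  exact Finsupp.single_eq_of_ne (by rintro rfl; exact he he')

end Grid

section Line

variable {F : Type*} [Field F] {m : ℕ} {P : Fin m → Finset F} (j0 : Fin m)

theorem evMon_update (e : Fin m → ℕ) (x : MCCPt P) (v : P j0) :
    evMon P e (Function.update x j0 v) =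
      (∏ j ∈ univ.erase j0, (x j : F) ^ e j) * (v : F) ^ e j0 := by
  rw [evMon, ← mul_prod_erase univ _ (mem_univ j0), Function.update_self, mul_comm]
  congr 1
  exact prod_congr rfl fun j hj => by rw [Function.update_of_ne (ne_of_mem_erase hj)]

theorem exists_natDegree_le_eval_update {Δ : Finset (Fin m → ℕ)} {i0 : ℕ}
    (hΔ : ∀ e ∈ Δ, e j0 ≤ i0) {c : MCCPt P → F} (hc : c ∈ MCC P Δ) (x : MCCPt P) :
    ∃ q : F[X], q.natDegree ≤ i0 ∧ ∀ v, c (Function.update x j0 v) = q.eval (v : F) := by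
  induction hc using Submodule.span_induction with
  | mem _ h =>
    obtain ⟨e, he, rfl⟩ := h
    refine ⟨C (∏ j ∈ univ.erase j0, (x j : F) ^ e j) * X ^ e j0, ?_, fun v => ?_⟩
    · exact (natDegree_C_mul_le _ _).trans ((natDegree_X_pow_le _).trans (hΔ e he))
    · rw [evMon_update, eval_mul, eval_C, eval_pow, eval_X]
  | zero => exact ⟨0, by simp, fun v => by simp⟩
  | add c c' _ _ ih ih' =>
    obtain ⟨q, hq, hcq⟩ := ih
    obtain ⟨q', hq', hcq'⟩ := ih'
    exact ⟨q + q', (natDegree_add_le _ _).trans (max_le hq hq'), fun v => by simp [hcq, hcq']⟩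
  | smul a c _ ih =>
    obtain ⟨q, hq, hcq⟩ := ih
    exact ⟨C a * q, (natDegree_C_mul_le _ _).trans hq, fun v => by simp [hcq]⟩

variable [DecidableEq F]

theorem card_filter_update_ne_zero_le_hammingNorm (c : MCCPt P → F) (x : MCCPt P) :
    #{v : P j0 | c (Function.update x j0 v) ≠ 0} ≤ hammingNorm c := by
  rw [← card_image_of_injective _ (Function.update_injective x j0)]
  refine card_le_card fun y hy => ?_
  obtain ⟨v, hv, rfl⟩ := mem_image.1 hy
  simpa using hv

theorem add_card_filter_update_ne_zero_le_hammingNorm (c : MCCPt P → F) {x y : MCCPt P}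
    {j : Fin m} (hj : j ≠ j0) (hxy : x j ≠ y j) :
    #{v : P j0 | c (Function.update x j0 v) ≠ 0} + #{v : P j0 | c (Function.update y j0 v) ≠ 0}
      ≤ hammingNorm c := by
  rw [← card_image_of_injective _ (Function.update_injective x j0),
    ← card_image_of_injective _ (Function.update_injective y j0), ← card_union_of_disjoint]
  · refine card_le_card (union_subset ?_ ?_) <;>
    · intro z hz
      obtain ⟨v, hv, rfl⟩ := mem_image.1 hz
      simpa using hv
  · refine disjoint_left.2 fun z hzx hzy => hxy ?_
    obtain ⟨v, -, rfl⟩ := mem_image.1 hzx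
    obtain ⟨w, -, hw⟩ := mem_image.1 hzy
    simpa [Function.update_of_ne hj] using (congrFun hw j).symm

theorem le_card_filter_update_ne_zero {Δ : Finset (Fin m → ℕ)} {i0 : ℕ}
    (hΔ : ∀ e ∈ Δ, e j0 ≤ i0) {c : MCCPt P → F} (hc : c ∈ MCC P Δ) {x : MCCPt P} (hx : c x ≠ 0) :
    #(P j0) - i0 ≤ #{v : P j0 | c (Function.update x j0 v) ≠ 0} := by
  obtain ⟨q, hdeg, hq⟩ := exists_natDegree_le_eval_update j0 hΔ hc x
  have hq0 : q ≠ 0 := by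
    rintro rfl
    exact hx (by simpa using hq (x j0))
  simp_rw [hq]
  have := card_sub_natDegree_le_card_filter_eval_ne_zero (P j0) hq0
  omega

theorem isLRC_MCC {Δ : Finset (Fin m → ℕ)} {i0 : ℕ} (hΔ : ∀ e ∈ Δ, e j0 ≤ i0) :
    IsLRC (MCC P Δ) (i0 + 1) ((P j0).card - i0) := by
  intro x
  refine ⟨univ.image (Function.update x j0), mem_image.2 ⟨x j0, mem_univ _, by simp⟩, ?_, ?_⟩
  · refine card_image_le.trans ?_
    simp only [card_univ, Fintype.card_coe]
    omega
  · rintro c hc ⟨_, hy, hcy⟩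
    obtain ⟨v, -, rfl⟩ := mem_image.1 hy
    rw [filter_image, card_image_of_injective _ (Function.update_injective x j0)]
    simpa using le_card_filter_update_ne_zero j0 hΔ hc hcy

theorem prodEval_eq_smul_of_support_subset_line {c : MCCPt P → F} {x0 : MCCPt P}
    (hsupp : ∀ x, c x ≠ 0 → ∀ j ≠ j0, x j = x0 j) {q : F[X]}
    (hq : ∀ v, c (Function.update x0 j0 v) = q.eval (v : F)) :
    prodEval P (fun j => if j = j0 then q else nodal (P j \ {(x0 j : F)}) id) =
      (∏ j ∈ univ.erase j0, (nodal (P j \ {(x0 j : F)}) id).eval (x0 j : F)) • c := by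
  funext x
  simp only [prodEval, Pi.smul_apply, smul_eq_mul]
  rw [← mul_prod_erase univ _ (mem_univ j0), if_pos rfl]
  by_cases hx : ∀ j ≠ j0, x j = x0 j
  · have hline : Function.update x0 j0 (x j0) = x := by
      funext j
      by_cases hj : j = j0
      · subst hj
        simp
      · simp [hj, hx j hj]
    rw [show c x = q.eval (x j0 : F) by rw [← hq, hline], mul_comm]
    congr 1
    refine prod_congr rfl fun j hj => ?_
    rw [if_neg (ne_of_mem_erase hj), hx j (ne_of_mem_erase hj)]
  · rw [not_not.1 (mt (hsupp x) hx), mul_zero]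
    obtain ⟨j, hj, hxj⟩ : ∃ j, j ≠ j0 ∧ x j ≠ x0 j := by simpa using hx
    refine mul_eq_zero_of_right _ (prod_eq_zero (mem_erase.2 ⟨hj, mem_univ j⟩) ?_)
    rw [if_neg hj, eval_nodal_sdiff_singleton_eq_zero_iff (x j).2]
    exact fun h => hxj (Subtype.ext h)

theorem coeff_eq_zero_of_support_subset_line (hP : ∀ j, (P j).Nonempty)
    {Δ : Finset (Fin m → ℕ)} (hΔ : Δ ⊆ fullBox P) {c : MCCPt P → F} (hc : c ∈ MCC P Δ)
    {x0 : MCCPt P} (hsupp : ∀ x, c x ≠ 0 → ∀ j ≠ j0, x j = x0 j) {q : F[X]}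
    (hqdeg : q.natDegree < #(P j0)) (hq : ∀ v, c (Function.update x0 j0 v) = q.eval (v : F))
    {t : ℕ} (ht : t < #(P j0)) (htΔ : (fun j => if j = j0 then t else #(P j) - 1) ∉ Δ) :
    q.coeff t = 0 := by
  have he : (fun j => if j = j0 then t else #(P j) - 1) ∈ fullBox P := by
    simp only [fullBox, mem_boxΔ]
    intro j
    split_ifs with hj
    · subst hj
      omega
    · exact le_rfl
  have hcoord := monomialBasis_repr_prodEval hP
    (p := fun j => if j = j0 then q else nodal (P j \ {(x0 j : F)}) id) (fun j => by
    split_ifs with hj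
    · subst hj
      omega
    · exact (natDegree_nodal_sdiff_singleton (x0 j).2).le) ⟨_, he⟩
  rw [prodEval_eq_smul_of_support_subset_line j0 hsupp hq, map_smul, Finsupp.smul_apply,
    monomialBasis_repr_eq_zero_of_mem_MCC hP hΔ hc htΔ, smul_zero,
    ← mul_prod_erase univ _ (mem_univ j0), prod_eq_one, mul_one] at hcoord
  · simpa using hcoord.symm
  · intro j hj
    simp only [if_neg (ne_of_mem_erase hj)]
    rw [← natDegree_nodal_sdiff_singleton (x0 j).2]
    exact nodal_monic.coeff_natDegree

end Line

section HyperrectElim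

variable {F : Type*} {m : ℕ}

def hyperrectElim (P : Fin m → Finset F) (j0 : Fin m) (i0 s : ℕ) : Finset (Fin m → ℕ) :=
  (boxΔ fun j => if j = j0 then i0 else (P j).card - 1) \
    ((Finset.Icc s i0).image fun t => fun j => if j = j0 then t else (P j).card - 1)

variable {P : Fin m → Finset F} {j0 : Fin m} {i0 s : ℕ}

theorem mem_hyperrectElim {e : Fin m → ℕ} :
    e ∈ hyperrectElim P j0 i0 s ↔ (∀ j, e j ≤ if j = j0 then i0 else #(P j) - 1) ∧
      ¬(s ≤ e j0 ∧ ∀ j ≠ j0, e j = #(P j) - 1) := by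
  rw [hyperrectElim, mem_sdiff, mem_boxΔ]
  refine and_congr_right fun he => not_congr ⟨?_, fun ⟨hs, htop⟩ => ?_⟩
  · intro h
    obtain ⟨t, ht, rfl⟩ := mem_image.1 h
    exact ⟨by simpa using (mem_Icc.1 ht).1, fun j hj => if_neg hj⟩
  · refine mem_image.2 ⟨e j0, mem_Icc.2 ⟨hs, by simpa using he j0⟩, funext fun j => ?_⟩
    by_cases hj : j = j0
    · simp [hj]
    · simp [hj, htop j hj]

theorem apply_le_of_mem_hyperrectElim {e : Fin m → ℕ} (he : e ∈ hyperrectElim P j0 i0 s) :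
    e j0 ≤ i0 := by
  simpa using (mem_hyperrectElim.1 he).1 j0

theorem hyperrectElim_subset_fullBox (hi0 : i0 < #(P j0)) :
    hyperrectElim P j0 i0 s ⊆ fullBox P := fun e he => by
  rw [fullBox, mem_boxΔ]
  intro j
  have := (mem_hyperrectElim.1 he).1 j
  split_ifs at this with hj
  · subst hj
    omega
  · exact this

theorem card_hyperrectElim (hP : ∀ j, (P j).Nonempty) (hs : s ≤ i0) :
    #(hyperrectElim P j0 i0 s) = (i0 + 1) * ∏ j ∈ univ.erase j0, #(P j) - (i0 - s + 1) := by
  have hsub : (Icc s i0).image (fun t j => if j = j0 then t else #(P j) - 1) ⊆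
      boxΔ fun j => if j = j0 then i0 else #(P j) - 1 := fun e he => by
    obtain ⟨t, ht, rfl⟩ := mem_image.1 he
    rw [mem_boxΔ]
    intro j
    split_ifs
    exacts [(mem_Icc.1 ht).2, le_rfl]
  have hinj : Function.Injective fun t (j : Fin m) => if j = j0 then t else #(P j) - 1 :=
    fun a b h => by simpa using congrFun h j0
  rw [hyperrectElim, card_sdiff_of_subset hsub, card_image_of_injective _ hinj, Nat.card_Icc,
    card_boxΔ, ← mul_prod_erase univ _ (mem_univ j0), if_pos rfl]
  rw [prod_congr rfl fun j hj => by rw [if_neg (ne_of_mem_erase hj),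
    Nat.sub_add_cancel (hP j).card_pos]]
  omega

variable [Field F] [DecidableEq F]

theorem le_hammingNorm_of_mem_MCC_hyperrectElim (hP : ∀ j, (P j).Nonempty) (hi0 : i0 < #(P j0))
    {c : MCCPt P → F} (hc : c ∈ MCC P (hyperrectElim P j0 i0 s)) (hc0 : c ≠ 0) :
    2 * (#(P j0) - i0) ≤ hammingNorm c ∨ (1 ≤ s ∧ #(P j0) - s + 1 ≤ hammingNorm c) := by
  have hΔ : ∀ e ∈ hyperrectElim P j0 i0 s, e j0 ≤ i0 := fun e => apply_le_of_mem_hyperrectElim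
  obtain ⟨x0, hx0⟩ := Function.ne_iff.1 hc0
  by_cases hsupp : ∀ x, c x ≠ 0 → ∀ j ≠ j0, x j = x0 j
  · right
    obtain ⟨q, hqdeg, hq⟩ := exists_natDegree_le_eval_update j0 hΔ hc x0
    have hcoeff : ∀ t, s ≤ t → q.coeff t = 0 := fun t hst => by
      rcases le_or_gt t i0 with hti | hti
      · refine coeff_eq_zero_of_support_subset_line j0 hP (hyperrectElim_subset_fullBox hi0) hc
          hsupp (by omega) hq (by omega) fun he => (mem_hyperrectElim.1 he).2 ?_
        exact ⟨by simpa using hst, fun j hj => if_neg hj⟩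
      · exact coeff_eq_zero_of_natDegree_lt (by omega)
    have hq0 : q ≠ 0 := by
      rintro rfl
      exact hx0 (by simpa using hq (x0 j0))
    have hs : 1 ≤ s := by
      by_contra! hs
      exact hq0 (Polynomial.ext fun t => by simpa using hcoeff t (by omega))
    have hdeg : q.natDegree ≤ s - 1 :=
      natDegree_le_iff_coeff_eq_zero.2 fun t ht => hcoeff t (by omega)
    have hcount := card_sub_natDegree_le_card_filter_eval_ne_zero (P j0) hq0
    have hweight := card_filter_update_ne_zero_le_hammingNorm j0 c x0
    simp_rw [hq] at hweight
    exact ⟨hs, by omega⟩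
  · left
    obtain ⟨x1, hx1, j, hj, hxj⟩ : ∃ x1, c x1 ≠ 0 ∧ ∃ j ≠ j0, x1 j ≠ x0 j := by simpa using hsupp
    have := add_card_filter_update_ne_zero_le_hammingNorm j0 c hj hxj
    have := le_card_filter_update_ne_zero j0 hΔ hc hx1
    have := le_card_filter_update_ne_zero j0 hΔ hc hx0
    omega

theorem exists_mem_MCC_hyperrectElim_hammingNorm_eq_sub (hP : ∀ j, (P j).Nonempty) (hs : 1 ≤ s)
    (hsi : s ≤ i0 + 1) :
    ∃ c ∈ MCC P (hyperrectElim P j0 i0 s), hammingNorm c = #(P j0) - s + 1 := by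
  have := exists_mem_MCC_hammingNorm_eq (P := P) (Δ := hyperrectElim P j0 i0 s)
    (k := fun j => if j = j0 then #(P j0) - s + 1 else 1) (fun j => ?_) fun e he => ?_
  · simpa using this
  · have := (hP j).card_pos
    split_ifs with hj
    · subst hj
      omega
    · omega
  · rw [mem_boxΔ] at he
    refine mem_hyperrectElim.2 ⟨fun j => ?_, fun h => ?_⟩
    · have := he j
      split_ifs at this ⊢ with hj
      · subst hj
        omega
      · omega
    · have := he j0
      simp at this
      omega

theorem exists_mem_MCC_hyperrectElim_hammingNorm_eq_two_mul (hP : ∀ j, (P j).Nonempty)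
    {j1 : Fin m} (hj1 : j1 ≠ j0) (h2 : 2 ≤ #(P j1)) :
    ∃ c ∈ MCC P (hyperrectElim P j0 i0 s), hammingNorm c = 2 * #(P j0) := by
  set k : Fin m → ℕ := fun j => if j = j0 then #(P j0) else if j = j1 then 2 else 1
  have hk : ∏ j, k j = 2 * #(P j0) := by
    rw [← mul_prod_erase univ _ (mem_univ j0),
      ← mul_prod_erase (univ.erase j0) _ (mem_erase.2 ⟨hj1, mem_univ j1⟩), prod_eq_one]
    · simp [k, hj1, mul_comm]
    · intro j hj
      simp [k, ne_of_mem_erase hj, ne_of_mem_erase (mem_of_mem_erase hj)]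
  rw [← hk]
  refine exists_mem_MCC_hammingNorm_eq (fun j => ?_) fun e he => ?_
  · have := (hP j).card_pos
    simp only [k]
    split_ifs with hj hj' <;> (try subst hj) <;> (try subst hj') <;> omega
  · rw [mem_boxΔ] at he
    refine mem_hyperrectElim.2 ⟨fun j => ?_, fun h => ?_⟩
    · have := he j
      simp only [k] at this
      split_ifs at this ⊢ with hj <;> (try subst hj) <;> omega
    · have := he j1
      have := h.2 j1 hj1
      simp only [k, if_neg hj1, if_true] at *
      omega

theorem hasMinDist_MCC_hyperrectElim (hP : ∀ j, (P j).Nonempty) {j1 : Fin m} (hj1 : j1 ≠ j0)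
    (h2 : 2 ≤ #(P j1))
    (hcase : (max 1 (2 * i0 + 1 - #(P j0)) ≤ s ∧ s ≤ i0 ∧ i0 ≤ #(P j0) - 2) ∨ (i0 = 0 ∧ s = 0)) :
    HasMinDist (MCC P (hyperrectElim P j0 i0 s))
      (if 1 ≤ s then #(P j0) - s + 1 else 2 * #(P j0)) := by
  have hn := (hP j0).card_pos
  simp only [max_le_iff] at hcase
  have hi0 : i0 < #(P j0) := by omega
  refine ⟨fun c hc hc0 => ?_, ?_⟩
  · rcases le_hammingNorm_of_mem_MCC_hyperrectElim hP hi0 hc hc0 with h | ⟨hs, h⟩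
    · split_ifs <;> omega
    · rwa [if_pos hs]
  · split_ifs with hs
    · obtain ⟨c, hc, hw⟩ := exists_mem_MCC_hyperrectElim_hammingNorm_eq_sub (j0 := j0) (i0 := i0)
        hP hs (by omega)
      exact ⟨c, hc, by rintro rfl; rw [hammingNorm_zero] at hw; omega, hw⟩
    · obtain ⟨c, hc, hw⟩ := exists_mem_MCC_hyperrectElim_hammingNorm_eq_two_mul (i0 := i0) (s := s)
        hP hj1 h2
      exact ⟨c, hc, by rintro rfl; rw [hammingNorm_zero] at hw; omega, hw⟩

end HyperrectElim

theorem hyperrectElim_params_attain_bound {n N i0 s : ℕ} (hn : 1 ≤ n) (hN : 2 ≤ N)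
    (hcase : (max 1 (2 * i0 + 1 - n) ≤ s ∧ s ≤ i0 ∧ i0 ≤ n - 2) ∨ (i0 = 0 ∧ s = 0)) :
    (i0 + 1) * N - (i0 - s + 1) + (if 1 ≤ s then n - s + 1 else 2 * n) +
      (((i0 + 1) * N - (i0 - s + 1) + (i0 + 1) - 1) / (i0 + 1) - 1) * (n - i0 - 1) =
      n * N + 1 := by
  rcases hcase with ⟨hs, hsi, hin⟩ | ⟨rfl, rfl⟩
  · have hs1 : 1 ≤ s := le_of_max_le_left hs
    have hN' : i0 + 1 ≤ (i0 + 1) * N := Nat.le_mul_of_pos_right _ (by omega)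
    have hceil : ((i0 + 1) * N - (i0 - s + 1) + (i0 + 1) - 1) / (i0 + 1) = N := by
      rw [show (i0 + 1) * N - (i0 - s + 1) + (i0 + 1) - 1 = s - 1 + (i0 + 1) * N by omega,
        Nat.add_mul_div_left _ _ (Nat.succ_pos i0), Nat.div_eq_of_lt (by omega), zero_add]
    rw [hceil, if_pos hs1]
    zify [hs1, hsi, (by omega : i0 - s + 1 ≤ (i0 + 1) * N), (by omega : s ≤ n),
      (by omega : 1 ≤ N), (by omega : i0 ≤ n), (by omega : 1 ≤ n - i0)]
    ring
  · obtain ⟨N, rfl⟩ : ∃ N', N = N' + 2 := ⟨N - 2, by omega⟩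
    obtain ⟨n, rfl⟩ : ∃ n', n = n' + 1 := ⟨n - 1, by omega⟩
    rw [if_neg (by norm_num)]
    simp only [zero_add, one_mul, Nat.div_one, Nat.sub_zero, Nat.add_sub_cancel]
    rw [show N + 2 - 1 = N + 1 by omega, Nat.add_sub_cancel]
    ring

theorem mcc_hyperrectelim_optimal_general
    {F : Type*} [Field F] [DecidableEq F] {m : ℕ} (hm : 3 ≤ m)
    (P : Fin m → Finset F) (hP : ∀ j, 2 ≤ (P j).card)
    (j0 : Fin m) (i0 s : ℕ)
    (hcase : (max 1 (2 * i0 + 1 - (P j0).card) ≤ s ∧ s ≤ i0 ∧ i0 ≤ (P j0).card - 2) ∨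
      (i0 = 0 ∧ s = 0)) :
    IsOptimalLRC
      (MCC P ((boxΔ fun j => if j = j0 then i0 else (P j).card - 1) \
        ((Finset.Icc s i0).image fun t => fun j => if j = j0 then t else (P j).card - 1)))
      (((i0 + 1) * ∏ j ∈ Finset.univ.erase j0, (P j).card) - (i0 - s + 1))
      (if 1 ≤ s then (P j0).card - s + 1 else 2 * (P j0).card)
      (i0 + 1) ((P j0).card - i0) := by
  change IsOptimalLRC (MCC P (hyperrectElim P j0 i0 s)) _ _ _ _
  have hne : ∀ j, (P j).Nonempty := fun j => card_pos.1 (by have := hP j; omega)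
  have : Nontrivial (Fin m) := Fin.nontrivial_iff_two_le.2 (by omega)
  obtain ⟨j1, hj1⟩ := exists_ne j0
  have hN : 2 ≤ ∏ j ∈ univ.erase j0, #(P j) :=
    (hP j1).trans <| single_le_prod' (f := fun j => #(P j)) (fun j _ => (hne j).card_pos)
      (mem_erase.2 ⟨hj1, mem_univ j1⟩)
  have hcard : Fintype.card (MCCPt P) = #(P j0) * ∏ j ∈ univ.erase j0, #(P j) := by
    rw [mul_prod_erase univ (fun j => #(P j)) (mem_univ j0)]
    simp
  have hi0 : i0 < #(P j0) := by
    rcases hcase with ⟨-, -, h⟩ | ⟨rfl, -⟩ <;> have := hP j0 <;> omega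
  have hsi : s ≤ i0 := by rcases hcase with ⟨-, h, -⟩ | ⟨rfl, rfl⟩ <;> omega
  refine ⟨isLRC_MCC j0 fun e => apply_le_of_mem_hyperrectElim, ?_,
    hasMinDist_MCC_hyperrectElim hne hj1 (hP j1) hcase, ?_⟩
  · rw [finrank_MCC hne (hyperrectElim_subset_fullBox hi0), card_hyperrectElim hne hsi]
  · rw [hcard]
    exact hyperrectElim_params_attain_bound (by have := hP j0; omega) hN hcase

/-- For `m ≥ 3`, removing from the box `Δ¹` (with `e_{j₀} ≤ i_{j₀}` and
`e_j ≤ n_j - 1` for `j ≠ j₀`) the points with `e_j = n_j - 1` for `j ≠ j₀` and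
`s ≤ e_{j₀} ≤ i_{j₀}`, where `max{1, 2i_{j₀}-n_{j₀}+1} ≤ s ≤ i_{j₀} ≤ n_{j₀}-2` or
`i_{j₀} = s = 0`, yields an optimal `(i_{j₀}+1, n_{j₀}-i_{j₀})`-LRC with dimension
`(i_{j₀}+1)∏_{j≠j₀} n_j - (i_{j₀}-s+1)` and minimum distance `n_{j₀}-s+1` if `s ≥ 1` and
`2n_{j₀}` if `s = 0`. -/
theorem mcc_hyperrectelim_optimal
    {F : Type*} [Field F] [Fintype F] [DecidableEq F] {m : ℕ} (hm : 3 ≤ m)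
    (P : Fin m → Finset F) (hP : ∀ j, 2 ≤ (P j).card)
    (j0 : Fin m) (i0 s : ℕ)
    (hcase : (max 1 (2 * i0 + 1 - (P j0).card) ≤ s ∧ s ≤ i0 ∧ i0 ≤ (P j0).card - 2) ∨
      (i0 = 0 ∧ s = 0)) :
    IsOptimalLRC
      (MCC P ((boxΔ fun j => if j = j0 then i0 else (P j).card - 1) \
        ((Finset.Icc s i0).image fun t => fun j => if j = j0 then t else (P j).card - 1)))
      (((i0 + 1) * ∏ j ∈ Finset.univ.erase j0, (P j).card) - (i0 - s + 1))
      (if 1 ≤ s then (P j0).card - s + 1 else 2 * (P j0).card)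
      (i0 + 1) ((P j0).card - i0) :=
  mcc_hyperrectelim_optimal_general hm P hP j0 i0 s hcase
end

section
/- In the J-affine variety setting, let Δ ⊆ E be closed with respect to p^h. Then for every subset R ⊆ {1,…,n}, the projection onto the coordinates in R of the subfield-subcode equals the subfield-subcode of the projection: π_R(S_Δ^{P,J}) = π_R(C_Δ^{P,J}) ∩ F_{p^h}^{#R}. -/
/-- In the `J`-affine variety setting with `Δ ⊆ E` closed with respect to
`p^h`, for every subset `R` of coordinates the projection onto `R` of the subfield-subcode
`S_Δ^{P,J}` equals the subfield-subcode of the projection: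
`π_R(S_Δ^{P,J}) = π_R(C_Δ^{P,J}) ∩ F_{p^h}^{#R}`.  Here `F_{p^h}` is realized inside
`F_q = F_{p^l}` as the set of elements fixed by the Frobenius `x ↦ x^{p^h}`. -/
theorem subfield_subcode_projection_commutes
    {F : Type*} [Field F] [Fintype F] [DecidableEq F]
    (p l h : ℕ) (hp : p.Prime) (hhl : h ∣ l) (hq : Fintype.card F = p ^ l)
    {m : ℕ} (hm : 2 ≤ m) (J : Finset (Fin m))
    (n : Fin m → ℕ) (hn : ∀ j, 2 ≤ n j)
    (hdivJ : ∀ j ∈ J, n j ∣ p ^ l - 1) (hdivJ' : ∀ j ∉ J, n j - 1 ∣ p ^ l - 1)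
    (P : Fin m → Finset F)
    (hPJ : ∀ j ∈ J, P j = Finset.univ.filter fun x => x ^ n j = 1)
    (hPJ' : ∀ j ∉ J, P j = insert 0 (Finset.univ.filter fun x => x ^ (n j - 1) = 1))
    (Δ : Finset (Fin m → ℕ)) (hΔne : Δ.Nonempty) (hΔE : ∀ e ∈ Δ, ∀ j, e j < n j)
    (hclosed : ∀ e ∈ Δ,
      (fun j => if j ∈ J then p ^ h * e j % n j
        else if e j = 0 then 0
        else if p ^ h * e j % (n j - 1) = 0 then n j - 1 else p ^ h * e j % (n j - 1)) ∈ Δ)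
    (R : Finset (MCCPt P)) (v : {x // x ∈ R} → F) :
    (∃ c ∈ MCC P Δ, (∀ i, c i ^ p ^ h = c i) ∧ ∀ x : {y // y ∈ R}, c x.1 = v x) ↔
      ((∃ c ∈ MCC P Δ, ∀ x : {y // y ∈ R}, c x.1 = v x) ∧ ∀ x, v x ^ p ^ h = v x) := by
  classical
  haveI hFp : Fact p.Prime := ⟨hp⟩
  have hcard2 : 2 ≤ Fintype.card F := Fintype.one_lt_card
  have hl : 1 ≤ l := by
    rcases Nat.eq_zero_or_pos l with hl0 | hl0
    · rw [hl0, pow_zero] at hq; omega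
    · exact hl0
  have hh : 1 ≤ h := by
    rcases Nat.eq_zero_or_pos h with hh0 | hh0
    · subst hh0; have := Nat.eq_zero_of_zero_dvd hhl; omega
    · exact hh0
  haveI hcharF : CharP F p := by
    have hpd : p ∣ Fintype.card F := by rw [hq]; exact dvd_pow_self p (by omega)
    have h1 : p ∣ ringChar F := (prime_dvd_char_iff_dvd_card p).mpr hpd
    have h2 : (ringChar F).Prime := CharP.char_is_prime F (ringChar F)
    have h3 : ringChar F = p := ((Nat.prime_dvd_prime_iff_eq hp h2).mp h1).symm
    exact h3 ▸ ringChar.charP F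
  have hph1 : 1 < p ^ h := Nat.one_lt_pow (by omega) hp.one_lt
  have hphne : p ^ h ≠ 0 := by positivity
  set d : ℕ := l / h with hdd
  have hld : h * d = l := Nat.mul_div_cancel' hhl
  have hd1 : 1 ≤ d := by
    rcases Nat.eq_zero_or_pos d with h0 | h0
    · rw [h0, Nat.mul_zero] at hld; omega
    · exact h0
  have hkey : ∀ x : F, x ^ (p ^ h) ^ d = x := by
    intro x
    rw [← pow_mul, hld, ← hq]
    exact FiniteField.pow_card x
  have hpowmod : ∀ (a : F) (t k : ℕ), a ^ t = 1 → a ^ k = a ^ (k % t) := by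
    intro a t k ht
    conv_lhs => rw [← Nat.mod_add_div k t]
    rw [pow_add, pow_mul, ht, one_pow, mul_one]
  -- Frobenius stability of the code
  have hstab : ∀ c ∈ MCC P Δ, (fun i => c i ^ p ^ h) ∈ MCC P Δ := by
    intro c hc
    have hc' : c ∈ Submodule.span F (evMon P '' ↑Δ) := hc
    clear hc
    induction hc' using Submodule.span_induction with
    | mem f hf =>
        obtain ⟨e, he, rfl⟩ := hf
        have heq : (fun x : MCCPt P => evMon P e x ^ p ^ h)
            = evMon P (fun j => if j ∈ J then p ^ h * e j % n j
                else if e j = 0 then 0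
                else if p ^ h * e j % (n j - 1) = 0 then n j - 1
                else p ^ h * e j % (n j - 1)) := by
          funext x
          simp only [evMon]
          rw [← Finset.prod_pow]
          refine Finset.prod_congr rfl fun j _ => ?_
          rw [← pow_mul, mul_comm (e j) (p ^ h)]
          by_cases hj : j ∈ J
          · rw [if_pos hj]
            have hx : ((x j : F)) ^ n j = 1 := by
              have h2 : (x j : F) ∈ Finset.univ.filter (fun y => y ^ n j = 1) := by
                rw [← hPJ j hj]; exact (x j).2
              simpa using h2
            exact hpowmod _ _ _ hx
          · rw [if_neg hj]
            have hx : (x j : F) = 0 ∨ ((x j : F)) ^ (n j - 1) = 1 := by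
              have h2 : (x j : F) ∈ insert 0 (Finset.univ.filter (fun y => y ^ (n j - 1) = 1)) := by
                rw [← hPJ' j hj]; exact (x j).2
              simpa using h2
            by_cases he0 : e j = 0
            · rw [if_pos he0, he0, Nat.mul_zero]
            · rw [if_neg he0]
              have hk0 : p ^ h * e j ≠ 0 := Nat.mul_ne_zero hphne he0
              rcases hx with hx | hx
              · rw [hx]
                by_cases hr : p ^ h * e j % (n j - 1) = 0
                · rw [if_pos hr, zero_pow hk0, zero_pow (by have := hn j; omega)]
                · rw [if_neg hr, zero_pow hk0, zero_pow hr]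
              · rw [hpowmod _ (n j - 1) _ hx]
                by_cases hr : p ^ h * e j % (n j - 1) = 0
                · rw [if_pos hr, hr, pow_zero]
                  exact hx.symm
                · rw [if_neg hr]
        rw [heq]
        exact Submodule.subset_span
          (Set.mem_image_of_mem _ (by exact_mod_cast hclosed e (by exact_mod_cast he)))
    | zero =>
        have h0 : (fun i : MCCPt P => (0 : MCCPt P → F) i ^ p ^ h) = 0 := by
          funext i; simp [zero_pow hphne]
        rw [h0]; exact Submodule.zero_mem _
    | add c₁ c₂ h₁ h₂ ih₁ ih₂ =>
        have hadd : (fun i => (c₁ + c₂) i ^ p ^ h)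
            = (fun i => c₁ i ^ p ^ h) + fun i => c₂ i ^ p ^ h := by
          funext i
          simp only [Pi.add_apply]
          exact add_pow_char_pow ..
        rw [hadd]; exact Submodule.add_mem _ ih₁ ih₂
    | smul a c₀ hc₀ ih =>
        have hsmul : (fun i => (a • c₀) i ^ p ^ h) = (a ^ p ^ h) • fun i => c₀ i ^ p ^ h := by
          funext i
          simp only [Pi.smul_apply, smul_eq_mul, mul_pow]
        rw [hsmul]; exact Submodule.smul_mem _ _ ih
  have hstabk : ∀ (k : ℕ), ∀ c ∈ MCC P Δ, (fun i => c i ^ (p ^ h) ^ k) ∈ MCC P Δ := by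
    intro k
    induction k with
    | zero => intro c hc; simpa using hc
    | succ k ih =>
        intro c hc
        have h1 := hstab _ (ih c hc)
        have h2 : (fun i => (fun i => c i ^ (p ^ h) ^ k) i ^ p ^ h)
            = fun i => c i ^ (p ^ h) ^ (k + 1) := by
          funext i; rw [← pow_mul, ← pow_succ]
        rwa [h2] at h1
  -- Frobenius fixes suitable sums
  have hs : ∀ g : ℕ → F, (∀ k, g k ^ p ^ h = g (k + 1)) → g d = g 0 →
      (∑ k ∈ Finset.range d, g k) ^ p ^ h = ∑ k ∈ Finset.range d, g k := by
    intro g hg hgd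
    have h1 : (∑ k ∈ Finset.range d, g k) ^ p ^ h = ∑ k ∈ Finset.range d, g k ^ p ^ h := by
      have := map_sum (iterateFrobenius F p h) g (Finset.range d)
      simpa only [iterateFrobenius_def] using this
    rw [h1, Finset.sum_congr rfl fun k _ => hg k]
    have h3 := Finset.sum_range_succ' g d
    rw [Finset.sum_range_succ g d, hgd] at h3
    exact add_right_cancel h3.symm
  -- a nonzero "trace" value
  obtain ⟨u, hu0⟩ : ∃ u : F, (∑ k ∈ Finset.range d, u ^ (p ^ h) ^ k) ≠ 0 := by
    set f : Polynomial F := ∑ k ∈ Finset.range d, Polynomial.X ^ (p ^ h) ^ k with hf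
    have hfne : f ≠ 0 := by
      intro h0
      have hcoe : ∀ k ∈ Finset.range d,
          ((Polynomial.X : Polynomial F) ^ (p ^ h) ^ k).coeff 1 = if k = 0 then 1 else 0 := by
        intro k _
        rw [Polynomial.coeff_X_pow]
        by_cases hk : k = 0
        · simp [hk]
        · have h1 : 1 < (p ^ h) ^ k := Nat.one_lt_pow hk hph1
          rw [if_neg (by omega), if_neg hk]
      have hc1 : f.coeff 1 = 1 := by
        rw [hf, Polynomial.finset_sum_coeff, Finset.sum_congr rfl hcoe,
          Finset.sum_ite_eq' (Finset.range d) 0 (fun _ => (1 : F)),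
          if_pos (Finset.mem_range.mpr (by omega))]
      rw [h0, Polynomial.coeff_zero] at hc1
      exact one_ne_zero hc1.symm
    have hdeg : (f.natDegree : Cardinal) < Cardinal.mk F := by
      have hle : f.natDegree ≤ (p ^ h) ^ (d - 1) := by
        apply Polynomial.natDegree_sum_le_of_forall_le
        intro k hk
        rw [Polynomial.natDegree_X_pow]
        exact Nat.pow_le_pow_right (by omega) (by
          have := Finset.mem_range.mp hk; omega)
      have hlt : (p ^ h) ^ (d - 1) < Fintype.card F := by
        rw [hq, ← pow_mul]
        apply Nat.pow_lt_pow_right hp.one_lt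
        have hmul : h * (d - 1 + 1) ≤ h * d := Nat.mul_le_mul_left h (by omega)
        rw [Nat.mul_add, Nat.mul_one] at hmul
        linarith
      rw [Cardinal.mk_fintype]
      exact_mod_cast lt_of_le_of_lt hle hlt
    obtain ⟨u, hu⟩ := Polynomial.exists_eval_ne_zero_of_natDegree_lt_card f hfne hdeg
    refine ⟨u, ?_⟩
    have hev : f.eval u = ∑ k ∈ Finset.range d, u ^ (p ^ h) ^ k := by
      rw [hf, Polynomial.eval_finset_sum]
      exact Finset.sum_congr rfl fun k _ => by
        rw [Polynomial.eval_pow, Polynomial.eval_X]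
    rw [← hev]
    exact hu
  set s : F := ∑ k ∈ Finset.range d, u ^ (p ^ h) ^ k with hs_def
  have hsfix : s ^ p ^ h = s :=
    hs (fun k => u ^ (p ^ h) ^ k)
      (fun k => by
        show (u ^ (p ^ h) ^ k) ^ p ^ h = u ^ (p ^ h) ^ (k + 1)
        rw [← pow_mul, ← pow_succ])
      (by
        show u ^ (p ^ h) ^ d = u ^ (p ^ h) ^ 0
        rw [hkey, pow_zero, pow_one])
  have hsfixk : ∀ k, s ^ (p ^ h) ^ k = s := by
    intro k
    induction k with
    | zero => simp
    | succ k ih => rw [pow_succ, pow_mul, ih, hsfix]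
  set t : F := u * s⁻¹ with ht_def
  have htr : ∑ k ∈ Finset.range d, t ^ (p ^ h) ^ k = 1 := by
    calc ∑ k ∈ Finset.range d, t ^ (p ^ h) ^ k
        = ∑ k ∈ Finset.range d, u ^ (p ^ h) ^ k * s⁻¹ := by
          refine Finset.sum_congr rfl fun k _ => ?_
          rw [ht_def, mul_pow, inv_pow, hsfixk k]
      _ = (∑ k ∈ Finset.range d, u ^ (p ^ h) ^ k) * s⁻¹ := (Finset.sum_mul ..).symm
      _ = s * s⁻¹ := by rw [← hs_def]
      _ = 1 := mul_inv_cancel₀ hu0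
  constructor
  · rintro ⟨c, hcM, hcfix, hcv⟩
    refine ⟨⟨c, hcM, hcv⟩, fun x => ?_⟩
    rw [← hcv x]
    exact hcfix x.1
  · rintro ⟨⟨c, hcM, hcv⟩, hv⟩
    refine ⟨fun i => ∑ k ∈ Finset.range d, t ^ (p ^ h) ^ k * c i ^ (p ^ h) ^ k, ?_, ?_, ?_⟩
    · have heq : (fun i => ∑ k ∈ Finset.range d, t ^ (p ^ h) ^ k * c i ^ (p ^ h) ^ k)
          = ∑ k ∈ Finset.range d, (t ^ (p ^ h) ^ k) • fun i => c i ^ (p ^ h) ^ k := by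
        funext i
        rw [Finset.sum_apply]
        exact Finset.sum_congr rfl fun k _ => by simp
      rw [heq]
      exact Submodule.sum_mem _ fun k _ => Submodule.smul_mem _ _ (hstabk k c hcM)
    · intro i
      exact hs (fun k => t ^ (p ^ h) ^ k * c i ^ (p ^ h) ^ k)
        (fun k => by
          show (t ^ (p ^ h) ^ k * c i ^ (p ^ h) ^ k) ^ p ^ h
              = t ^ (p ^ h) ^ (k + 1) * c i ^ (p ^ h) ^ (k + 1)
          rw [mul_pow, ← pow_mul t ((p ^ h) ^ k) (p ^ h), ← pow_mul (c i) ((p ^ h) ^ k) (p ^ h), pow_succ])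
        (by
          show t ^ (p ^ h) ^ d * c i ^ (p ^ h) ^ d = t ^ (p ^ h) ^ 0 * c i ^ (p ^ h) ^ 0
          rw [hkey, hkey, pow_zero, pow_one, pow_one])
    · intro x
      have hck : ∀ k, c x.1 ^ (p ^ h) ^ k = v x := by
        intro k
        induction k with
        | zero => simpa using hcv x
        | succ k ih => rw [pow_succ, pow_mul, ih, hv x]
      calc ∑ k ∈ Finset.range d, t ^ (p ^ h) ^ k * c x.1 ^ (p ^ h) ^ k
          = ∑ k ∈ Finset.range d, t ^ (p ^ h) ^ k * v x := by
            exact Finset.sum_congr rfl fun k _ => by rw [hck k]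
        _ = (∑ k ∈ Finset.range d, t ^ (p ^ h) ^ k) * v x := (Finset.sum_mul ..).symm
        _ = 1 * v x := by rw [htr]
        _ = v x := one_mul _
end
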